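/- arXiv:1604.01115 — 8 statements merged into one kernel-verified Lean document; each statement's English description precedes it below -/
import Mathlib

section
/- Let a, b be positive real numbers with a ≠ b and let q ≥ 0 be a real number. Then ∫₀^π sin^{2q}(ξ) / (a² + b² − 2ab·cos ξ)^{q+1/2} dξ = (2 / (a^{2q} b^{2q})) · ∫₀^{min(a,b)} t^{2q} / (√(a² − t²) · √(b² − t²)) dt. -/
/-!
Substitute `t = ab sin ξ / √(a² + b² - 2ab cos ξ)`, the distance from the origin to the line
through `a` and `b e^{iξ}`. For `b < a` it increases from `0` to `b` on `[0, ξ₀]`, where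
`cos ξ₀ = b / a`, and back to `0` on `[ξ₀, π]`. Since `a² - t² = a²(a - b cos ξ)² / v`
and `b² - t² = b²(b - a cos ξ)² / v` with `v = a² + b² - 2ab cos ξ`, the Jacobian turns the
kernel `t^{2q} / (√(a² - t²) √(b² - t²))` into `(ab)^{2q}` times the left-hand integrand, so
each half of `[0, π]` contributes one copy of the `t`-integral. The change of variables formula
for monotone maps needs no integrability, so the singularity of the kernel at `t = b` costs
nothing.
-/

open Real MeasureTheory Set

noncomputable def chordSq (a b ξ : ℝ) : ℝ := a ^ 2 + b ^ 2 - 2 * a * b * cos ξ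

noncomputable def chordHeight (a b ξ : ℝ) : ℝ := a * b * sin ξ / √(chordSq a b ξ)

noncomputable def copsonKernel (a b q t : ℝ) : ℝ :=
  t ^ (2 * q) / (√(a ^ 2 - t ^ 2) * √(b ^ 2 - t ^ 2))

lemma setIntegral_Icc_congr_Ioo {E : Type*} [NormedAddCommGroup E] [NormedSpace ℝ E]
    {f g : ℝ → E} {u w : ℝ} (h : EqOn f g (Ioo u w)) :
    ∫ x in Icc u w, f x = ∫ x in Icc u w, g x := by
  rw [integral_Icc_eq_integral_Ioo, integral_Icc_eq_integral_Ioo]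
  exact setIntegral_congr_fun measurableSet_Ioo h

lemma chordSq_comm (a b : ℝ) : chordSq a b = chordSq b a := by
  ext ξ; unfold chordSq; ring

lemma chordHeight_comm (a b : ℝ) : chordHeight a b = chordHeight b a := by
  ext ξ; rw [chordHeight, chordHeight, chordSq_comm, mul_comm a]

lemma copsonKernel_comm (a b q : ℝ) : copsonKernel a b q = copsonKernel b a q := by
  ext t; rw [copsonKernel, copsonKernel, mul_comm (√(a ^ 2 - t ^ 2))]

section
variable {a b : ℝ}

lemma chordSq_pos (ha : 0 < a) (hb : 0 < b) (hab : a ≠ b) (ξ : ℝ) : 0 < chordSq a b ξ := by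
  have hcos : 0 ≤ 1 - cos ξ := sub_nonneg.mpr (cos_le_one ξ)
  rw [show chordSq a b ξ = (a - b) ^ 2 + 2 * a * b * (1 - cos ξ) by unfold chordSq; ring]
  exact add_pos_of_pos_of_nonneg (sq_pos_of_ne_zero (sub_ne_zero.mpr hab)) (by positivity)

lemma continuous_chordSq : Continuous (chordSq a b) := by
  unfold chordSq; fun_prop

lemma sq_sub_chordHeight_sq {ξ : ℝ} (hv : 0 < chordSq a b ξ) :
    a ^ 2 - chordHeight a b ξ ^ 2 = (a * (a - b * cos ξ)) ^ 2 / chordSq a b ξ := by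
  rw [chordHeight, div_pow, sq_sqrt hv.le]
  field_simp
  unfold chordSq
  linear_combination -(a * b) ^ 2 * sin_sq_add_cos_sq ξ

lemma sqrt_sq_sub_chordHeight_sq (ha : 0 ≤ a) {ξ : ℝ} (hv : 0 < chordSq a b ξ) :
    √(a ^ 2 - chordHeight a b ξ ^ 2) = a * |a - b * cos ξ| / √(chordSq a b ξ) := by
  rw [sq_sub_chordHeight_sq hv, sqrt_div' _ hv.le, sqrt_sq_eq_abs, abs_mul, abs_of_nonneg ha]

lemma chordHeight_rpow (ha : 0 ≤ a) (hb : 0 ≤ b) {ξ : ℝ} (hs : 0 ≤ sin ξ)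
    (hv : 0 < chordSq a b ξ) (q : ℝ) :
    chordHeight a b ξ ^ (2 * q)
      = a ^ (2 * q) * b ^ (2 * q) * sin ξ ^ (2 * q) / chordSq a b ξ ^ q := by
  rw [chordHeight, div_rpow (by positivity) (sqrt_nonneg _), mul_rpow (by positivity) hs,
    mul_rpow ha hb, sqrt_eq_rpow, ← rpow_mul hv.le]
  ring_nf

lemma hasDerivAt_chordHeight {ξ : ℝ} (hv : 0 < chordSq a b ξ) :
    HasDerivAt (chordHeight a b)
      (a * b * ((a - b * cos ξ) * (a * cos ξ - b)) / (chordSq a b ξ * √(chordSq a b ξ)))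
      ξ := by
  have hv' : HasDerivAt (chordSq a b) (2 * a * b * sin ξ) ξ := by
    unfold chordSq
    simpa using ((hasDerivAt_cos ξ).const_mul (2 * a * b)).const_sub (a ^ 2 + b ^ 2)
  have hs : HasDerivAt (chordHeight a b) _ ξ :=
    (hasDerivAt_sin ξ).const_mul (a * b) |>.div (hv'.sqrt hv.ne') (sqrt_pos.mpr hv).ne'
  refine hs.congr_deriv ?_
  have hsqrt : 0 < √(chordSq a b ξ) := sqrt_pos.mpr hv
  field_simp
  rw [sq_sqrt hv.le]
  unfold chordSq
  linear_combination (-(a * b) ^ 2 * (a ^ 2 + b ^ 2 - 2 * a * b * cos ξ)) * sin_sq_add_cos_sq ξ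

lemma abs_deriv_mul_copsonKernel_chordHeight (ha : 0 < a) (hb : 0 < b) {ξ : ℝ}
    (hv : 0 < chordSq a b ξ) (hs : 0 ≤ sin ξ) (hab : a - b * cos ξ ≠ 0)
    (hba : b - a * cos ξ ≠ 0) (q : ℝ) :
    |deriv (chordHeight a b) ξ| * copsonKernel a b q (chordHeight a b ξ)
      = a ^ (2 * q) * b ^ (2 * q) * (sin ξ ^ (2 * q) / chordSq a b ξ ^ (q + 1 / 2)) := by
  have hsqrt : 0 < √(chordSq a b ξ) := sqrt_pos.mpr hv
  have hsqrt_b :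
      √(b ^ 2 - chordHeight a b ξ ^ 2) = b * |b - a * cos ξ| / √(chordSq a b ξ) := by
    rw [chordHeight_comm, chordSq_comm, sqrt_sq_sub_chordHeight_sq hb.le (by rwa [chordSq_comm])]
  rw [(hasDerivAt_chordHeight hv).deriv, copsonKernel, chordHeight_rpow ha.le hb.le hs hv,
    sqrt_sq_sub_chordHeight_sq ha.le hv, hsqrt_b, rpow_add hv, ← sqrt_eq_rpow, abs_div, abs_mul,
    abs_mul, abs_mul, abs_of_pos ha, abs_of_pos hb, abs_of_pos (mul_pos hv hsqrt),
    abs_sub_comm (a * cos ξ)]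
  have := abs_pos.mpr hab
  have := abs_pos.mpr hba
  have := rpow_pos_of_pos hv q
  field_simp
  rw [sq_sqrt hv.le]

lemma continuous_chordHeight (hv : ∀ ξ, 0 < chordSq a b ξ) : Continuous (chordHeight a b) :=
  continuous_iff_continuousAt.mpr fun ξ => (hasDerivAt_chordHeight (hv ξ)).continuousAt

@[simp] lemma chordHeight_zero : chordHeight a b 0 = 0 := by simp [chordHeight]

@[simp] lemma chordHeight_pi : chordHeight a b π = 0 := by simp [chordHeight]

lemma cos_arccos_div (hb : 0 < b) (hba : b < a) : cos (arccos (b / a)) = b / a :=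
  have ha := hb.trans hba
  cos_arccos (by linarith [div_pos hb ha]) ((div_lt_one ha).mpr hba).le

lemma chordHeight_arccos (hb : 0 < b) (hba : b < a) : chordHeight a b (arccos (b / a)) = b := by
  have ha : 0 < a := hb.trans hba
  have hd : 0 < a ^ 2 - b ^ 2 := by nlinarith
  have hsq : √(a ^ 2 - b ^ 2) ≠ 0 := (sqrt_pos.mpr hd).ne'
  have hv : chordSq a b (arccos (b / a)) = a ^ 2 - b ^ 2 := by
    rw [chordSq, cos_arccos_div hb hba]
    field_simp; ring
  rw [chordHeight, hv, sin_arccos, show 1 - (b / a) ^ 2 = (a ^ 2 - b ^ 2) / a ^ 2 by field_simp,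
    sqrt_div' _ (sq_nonneg a), sqrt_sq ha.le]
  field_simp

lemma chordSq_pos_of_lt (hb : 0 < b) (hba : b < a) (ξ : ℝ) : 0 < chordSq a b ξ :=
  chordSq_pos (hb.trans hba) hb hba.ne' ξ

lemma sub_mul_cos_pos (hb : 0 ≤ b) (hba : b < a) (ξ : ℝ) : 0 < a - b * cos ξ := by
  nlinarith [cos_le_one ξ]

lemma deriv_chordHeight_nonneg (hb : 0 < b) (hba : b < a) {ξ : ℝ} (h : b ≤ a * cos ξ) :
    0 ≤ deriv (chordHeight a b) ξ := by
  have ha := hb.trans hba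
  have := sub_mul_cos_pos hb.le hba ξ
  have : 0 ≤ a * cos ξ - b := by linarith
  have hv := chordSq_pos_of_lt hb hba ξ
  rw [(hasDerivAt_chordHeight hv).deriv]
  positivity

lemma deriv_chordHeight_nonpos (hb : 0 < b) (hba : b < a) {ξ : ℝ} (h : a * cos ξ ≤ b) :
    deriv (chordHeight a b) ξ ≤ 0 := by
  have ha := hb.trans hba
  have hfactor : (a - b * cos ξ) * (a * cos ξ - b) ≤ 0 :=
    mul_nonpos_of_nonneg_of_nonpos (sub_mul_cos_pos hb.le hba ξ).le (by linarith)
  have hv := chordSq_pos_of_lt hb hba ξ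
  rw [(hasDerivAt_chordHeight hv).deriv]
  exact div_nonpos_of_nonpos_of_nonneg (mul_nonpos_of_nonneg_of_nonpos (by positivity) hfactor)
    (by positivity)

lemma abs_deriv_mul_copsonKernel_chordHeight_of_lt (hb : 0 < b) (hba : b < a) {ξ : ℝ}
    (hξ : ξ ∈ Icc 0 π) (h : a * cos ξ ≠ b) (q : ℝ) :
    |deriv (chordHeight a b) ξ| * copsonKernel a b q (chordHeight a b ξ)
      = a ^ (2 * q) * b ^ (2 * q) * (sin ξ ^ (2 * q) / chordSq a b ξ ^ (q + 1 / 2)) :=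
  abs_deriv_mul_copsonKernel_chordHeight (hb.trans hba) hb (chordSq_pos_of_lt hb hba ξ)
    (sin_nonneg_of_nonneg_of_le_pi hξ.1 hξ.2) (sub_mul_cos_pos hb.le hba ξ).ne'
    (sub_ne_zero.2 h.symm) q

lemma lt_mul_cos_of_lt_arccos (hb : 0 < b) (hba : b < a) {ξ : ℝ} (h0 : 0 ≤ ξ)
    (h : ξ < arccos (b / a)) : b < a * cos ξ := by
  have ha := hb.trans hba
  have := cos_lt_cos_of_nonneg_of_le_pi h0 (arccos_le_pi _) h
  rw [cos_arccos_div hb hba, div_lt_iff₀ ha] at this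
  linarith

lemma mul_cos_lt_of_arccos_lt (hb : 0 < b) (hba : b < a) {ξ : ℝ} (h : arccos (b / a) < ξ)
    (hπ : ξ ≤ π) : a * cos ξ < b := by
  have ha := hb.trans hba
  have := cos_lt_cos_of_nonneg_of_le_pi (arccos_nonneg _) hπ h
  rw [cos_arccos_div hb hba, lt_div_iff₀ ha] at this
  linarith

lemma integral_copsonKernel_eq_integral_Icc_zero_arccos (hb : 0 < b) (hba : b < a) (q : ℝ) :
    ∫ t in Icc 0 b, copsonKernel a b q t
      = a ^ (2 * q) * b ^ (2 * q) *
          ∫ ξ in Icc 0 (arccos (b / a)), sin ξ ^ (2 * q) / chordSq a b ξ ^ (q + 1 / 2) := by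
  have hv := chordSq_pos_of_lt hb hba
  have hsign : ∀ ξ ∈ Ioo 0 (arccos (b / a)), b < a * cos ξ :=
    fun ξ hξ => lt_mul_cos_of_lt_arccos hb hba hξ.1.le hξ.2
  have hderiv : ∀ ξ ∈ Ioo 0 (arccos (b / a)), 0 ≤ deriv (chordHeight a b) ξ :=
    fun ξ hξ => deriv_chordHeight_nonneg hb hba (hsign ξ hξ).le
  calc ∫ t in Icc 0 b, copsonKernel a b q t
      = ∫ t in Icc (chordHeight a b 0) (chordHeight a b (arccos (b / a))),
          copsonKernel a b q t := by
        rw [chordHeight_zero, chordHeight_arccos hb hba]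
    _ = ∫ ξ in Icc 0 (arccos (b / a)),
          deriv (chordHeight a b) ξ • copsonKernel a b q (chordHeight a b ξ) :=
        (integral_Icc_deriv_smul_of_deriv_nonneg (continuous_chordHeight hv).continuousOn
          (fun ξ _ => (hasDerivAt_chordHeight (hv ξ)).differentiableAt.hasDerivAt) hderiv
          (arccos_nonneg _)).symm
    _ = ∫ ξ in Icc 0 (arccos (b / a)),
          a ^ (2 * q) * b ^ (2 * q) * (sin ξ ^ (2 * q) / chordSq a b ξ ^ (q + 1 / 2)) :=
        setIntegral_Icc_congr_Ioo fun ξ hξ => by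
          rw [smul_eq_mul, ← abs_of_nonneg (hderiv ξ hξ),
            abs_deriv_mul_copsonKernel_chordHeight_of_lt hb hba
              ⟨hξ.1.le, hξ.2.le.trans (arccos_le_pi _)⟩ (hsign ξ hξ).ne']
    _ = _ := integral_const_mul _ _

lemma integral_copsonKernel_eq_integral_Icc_arccos_pi (hb : 0 < b) (hba : b < a) (q : ℝ) :
    ∫ t in Icc 0 b, copsonKernel a b q t
      = a ^ (2 * q) * b ^ (2 * q) *
          ∫ ξ in Icc (arccos (b / a)) π, sin ξ ^ (2 * q) / chordSq a b ξ ^ (q + 1 / 2) := by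
  have hv := chordSq_pos_of_lt hb hba
  have hsign : ∀ ξ ∈ Ioo (arccos (b / a)) π, a * cos ξ < b :=
    fun ξ hξ => mul_cos_lt_of_arccos_lt hb hba hξ.1 hξ.2.le
  have hderiv : ∀ ξ ∈ Ioo (arccos (b / a)) π, deriv (chordHeight a b) ξ ≤ 0 :=
    fun ξ hξ => deriv_chordHeight_nonpos hb hba (hsign ξ hξ).le
  calc ∫ t in Icc 0 b, copsonKernel a b q t
      = -∫ ξ in Icc (arccos (b / a)) π,
          deriv (chordHeight a b) ξ • copsonKernel a b q (chordHeight a b ξ) := by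
        rw [integral_Icc_deriv_smul_of_deriv_nonpos (continuous_chordHeight hv).continuousOn
          (fun ξ _ => (hasDerivAt_chordHeight (hv ξ)).differentiableAt.hasDerivAt) hderiv
          (arccos_le_pi _), neg_neg, chordHeight_pi, chordHeight_arccos hb hba]
    _ = ∫ ξ in Icc (arccos (b / a)) π,
          -deriv (chordHeight a b) ξ * copsonKernel a b q (chordHeight a b ξ) := by
        simp only [← integral_neg, smul_eq_mul, neg_mul]
    _ = ∫ ξ in Icc (arccos (b / a)) π,
          a ^ (2 * q) * b ^ (2 * q) * (sin ξ ^ (2 * q) / chordSq a b ξ ^ (q + 1 / 2)) :=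
        setIntegral_Icc_congr_Ioo fun ξ hξ => by
          rw [← abs_of_nonpos (hderiv ξ hξ),
            abs_deriv_mul_copsonKernel_chordHeight_of_lt hb hba
              ⟨(arccos_nonneg _).trans hξ.1.le, hξ.2.le⟩ (hsign ξ hξ).ne]
    _ = _ := integral_const_mul _ _

lemma continuous_sin_rpow_div_chordSq_rpow {q : ℝ} (hv : ∀ ξ, 0 < chordSq a b ξ)
    (hq : 0 ≤ q) :
    Continuous fun ξ => sin ξ ^ (2 * q) / chordSq a b ξ ^ (q + 1 / 2) :=
  ((continuous_rpow_const (by positivity)).comp continuous_sin).div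
    (continuous_chordSq.rpow_const fun ξ => Or.inl (hv ξ).ne')
    fun ξ => (rpow_pos_of_pos (hv ξ) _).ne'

lemma integral_copson_of_lt {q : ℝ} (hb : 0 < b) (hba : b < a) (hq : 0 ≤ q) :
    ∫ ξ in 0..π, sin ξ ^ (2 * q) / chordSq a b ξ ^ (q + 1 / 2)
      = 2 / (a ^ (2 * q) * b ^ (2 * q)) * ∫ t in 0..b, copsonKernel a b q t := by
  have hF := (continuous_sin_rpow_div_chordSq_rpow (chordSq_pos_of_lt hb hba) hq).intervalIntegrable
    (μ := volume)
  have hC : 0 < a ^ (2 * q) * b ^ (2 * q) := by have := hb.trans hba; positivity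
  have h0 := integral_copsonKernel_eq_integral_Icc_zero_arccos hb hba q
  have hπ := integral_copsonKernel_eq_integral_Icc_arccos_pi hb hba q
  rw [← intervalIntegral.integral_add_adjacent_intervals (hF 0 (arccos (b / a))) (hF _ π),
    intervalIntegral.integral_of_le (arccos_nonneg _),
    intervalIntegral.integral_of_le (arccos_le_pi _),
    intervalIntegral.integral_of_le hb.le, ← integral_Icc_eq_integral_Ioc,
    ← integral_Icc_eq_integral_Ioc, ← integral_Icc_eq_integral_Ioc, div_mul_eq_mul_div,
    eq_div_iff hC.ne']
  linear_combination -h0 - hπ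

/-- Lemma (generalized Copson identity): for positive reals `a ≠ b` and `q ≥ 0`,
`∫₀^π sin^{2q} ξ / (a² + b² − 2ab cos ξ)^{q+1/2} dξ
  = (2 / (a^{2q} b^{2q})) ∫₀^{min(a,b)} t^{2q} / (√(a²−t²) √(b²−t²)) dt`. -/
theorem copson_general (a b q : ℝ) (ha : 0 < a) (hb : 0 < b) (hab : a ≠ b) (hq : 0 ≤ q) :
    (∫ ξ in (0:ℝ)..π, Real.sin ξ ^ (2*q) / (a^2 + b^2 - 2*a*b*Real.cos ξ) ^ (q + 1/2))
      = 2 / (a ^ (2*q) * b ^ (2*q)) *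
        ∫ t in (0:ℝ)..min a b, t ^ (2*q) / (Real.sqrt (a^2 - t^2) * Real.sqrt (b^2 - t^2)) := by
  change ∫ ξ in 0..π, sin ξ ^ (2 * q) / chordSq a b ξ ^ (q + 1 / 2)
    = 2 / (a ^ (2 * q) * b ^ (2 * q)) * ∫ t in 0..min a b, copsonKernel a b q t
  rcases hab.lt_or_gt with hab | hba
  · rw [min_eq_left hab.le, chordSq_comm, copsonKernel_comm, mul_comm (a ^ _)]
    exact integral_copson_of_lt ha hab hq
  · rw [min_eq_right hba.le]
    exact integral_copson_of_lt hb hba hq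
end
end

section
/- Let a and b be positive real numbers with a ≠ b, let τ ∈ (0,1), let υ ∈ ℂ with Re(υ) ≥ 0, and let u be a real number with |u| ≤ 1. Then (ab)^υ / (a² + b² − 2ab·u)^{τ+υ} = (Γ(τ)·Γ(υ+1)/Γ(τ+υ)) · (2 sin(τπ)/π) · ∫₀^{min(a,b)} [ (1 − (t²/(ab))²) / (1 + (t²/(ab))² − 2(t²/(ab))u)^{υ+1} ] · (t²/(ab))^υ · t^{2τ−1} / ((a² − t²)^τ (b² − t²)^τ) dt. -/
/-!
With `A = a² + b² - 2abu > 0`, the substitution `x = A y / (1 - y)` turns the Beta integral into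
`B(1 - τ, τ + υ) = A ^ (τ + υ) ∫₀^∞ x^(-τ) (A + x)^(-(υ + 1)) dx`. The map
`t ↦ (a² - t²)(b² - t²) / t²` is a decreasing bijection of `(0, min a b)` onto `(0, ∞)`, and
along it `A + x = (ab / t)² (1 + s² - 2su)` with `s = t² / (ab)`; substituting it gives the
integral of the theorem up to the factor `2 / (ab)^υ`. Finally
`B(1 - τ, τ + υ) = Γ(1 - τ) Γ(τ + υ) / Γ(υ + 1)` and `Γ(τ) Γ(1 - τ) = π / sin (π τ)`.
-/

open Real MeasureTheory Complex Set

lemma ofReal_cpow_eq_exp_log {r : ℝ} (hr : 0 < r) (w : ℂ) :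
    (r : ℂ) ^ w = Complex.exp (Real.log r * w) := by
  rw [cpow_def_of_ne_zero (ofReal_ne_zero.2 hr.ne'), ofReal_log hr.le]

lemma ofReal_eq_exp_log {r : ℝ} (hr : 0 < r) : (r : ℂ) = Complex.exp (Real.log r) := by
  rw [← ofReal_exp, Real.exp_log hr]

lemma integral_Ioi_eq_integral_Ioo_div_one_sub {A : ℝ} (hA : 0 < A) (g : ℝ → ℂ) :
    ∫ x in Ioi 0, g x = ∫ y in Ioo 0 1, (A / (1 - y) ^ 2) • g (A * y / (1 - y)) := by
  set φ : ℝ → ℝ := fun y ↦ A * y / (1 - y)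
  have himage : φ '' Ioo 0 1 = Ioi 0 := by
    ext x
    refine ⟨?_, fun hx ↦ ?_⟩
    · rintro ⟨y, ⟨hy0, hy1⟩, rfl⟩
      exact div_pos (mul_pos hA hy0) (sub_pos.2 hy1)
    · have hAx : 0 < A + x := add_pos hA hx
      refine ⟨x / (A + x), ⟨div_pos hx hAx, (div_lt_one hAx).2 (by linarith)⟩, ?_⟩
      simp only [φ]
      rw [one_sub_div hAx.ne', add_sub_cancel_right]
      field_simp
  have hderiv : ∀ y ∈ Ioo (0 : ℝ) 1, HasDerivWithinAt φ (A / (1 - y) ^ 2) (Ioo 0 1) y := by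
    intro y hy
    have h1y : 1 - y ≠ 0 := (sub_pos.2 hy.2).ne'
    refine (((hasDerivAt_id' y).const_mul A).div
      ((hasDerivAt_id' y).const_sub 1) h1y).hasDerivWithinAt.congr_deriv ?_
    field_simp
    ring
  have hinj : InjOn φ (Ioo 0 1) := by
    intro y₁ hy₁ y₂ hy₂ h
    simp only [φ] at h
    rw [div_eq_div_iff (sub_pos.2 hy₁.2).ne' (sub_pos.2 hy₂.2).ne'] at h
    nlinarith
  rw [← himage, integral_image_eq_integral_abs_deriv_smul measurableSet_Ioo hderiv hinj]
  refine setIntegral_congr_fun measurableSet_Ioo fun y ⟨_, hy1⟩ ↦ ?_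
  rw [abs_of_pos (div_pos hA (pow_pos (sub_pos.2 hy1) 2))]

lemma integral_Ioi_cpow_mul_add_cpow {A : ℝ} (hA : 0 < A) (p q : ℂ) :
    ∫ x in Ioi (0 : ℝ), (x : ℂ) ^ (p - 1) * ((A + x : ℝ) : ℂ) ^ (-(p + q))
      = (A : ℂ) ^ (-q) * betaIntegral p q := by
  rw [integral_Ioi_eq_integral_Ioo_div_one_sub hA, betaIntegral,
    intervalIntegral.integral_of_le zero_le_one, integral_Ioc_eq_integral_Ioo,
    ← integral_const_mul]
  refine setIntegral_congr_fun measurableSet_Ioo fun y ⟨hy0, hy1⟩ ↦ ?_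
  have hz : 0 < 1 - y := sub_pos.2 hy1
  have hsum : A + A * y / (1 - y) = A / (1 - y) := by field_simp; ring
  rw [hsum, real_smul, show (1 : ℂ) - y = ((1 - y : ℝ) : ℂ) by push_cast; ring]
  simp (disch := positivity) only [ofReal_cpow_eq_exp_log]
  simp (disch := positivity) only [ofReal_eq_exp_log]
  simp (disch := positivity) only [Real.log_mul, Real.log_div, Real.log_pow]
  simp only [← Complex.exp_add]
  congr 1
  push_cast
  ring

noncomputable def kahaneMap (a b t : ℝ) : ℝ := (a ^ 2 - t ^ 2) * (b ^ 2 - t ^ 2) / t ^ 2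

lemma kahaneMap_eq_mul {a b t : ℝ} (ht : t ≠ 0) :
    kahaneMap a b t = (a ^ 2 / t - t) * (b ^ 2 / t - t) := by
  unfold kahaneMap
  field_simp

lemma sq_div_sub_pos {a t : ℝ} (ht : 0 < t) (hta : t < a) : 0 < a ^ 2 / t - t := by
  rw [sub_pos, lt_div_iff₀ ht]
  nlinarith

lemma strictAntiOn_sq_div_sub (a : ℝ) : StrictAntiOn (fun t ↦ a ^ 2 / t - t) (Ioi 0) :=
  fun s hs t _ hst ↦ by
    have := div_le_div_of_nonneg_left (sq_nonneg a) hs hst.le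
    dsimp only
    linarith

lemma strictAntiOn_kahaneMap (a b : ℝ) : StrictAntiOn (kahaneMap a b) (Ioo 0 (min a b)) := by
  intro s ⟨hs, _⟩ t ⟨ht, htm⟩ hst
  rw [kahaneMap_eq_mul hs.ne', kahaneMap_eq_mul ht.ne']
  exact mul_lt_mul'' (strictAntiOn_sq_div_sub a hs ht hst) (strictAntiOn_sq_div_sub b hs ht hst)
    (sq_div_sub_pos ht (htm.trans_le (min_le_left a b))).le
    (sq_div_sub_pos ht (htm.trans_le (min_le_right a b))).le

lemma hasDerivAt_kahaneMap (a b : ℝ) {t : ℝ} (ht : t ≠ 0) :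
    HasDerivAt (kahaneMap a b) (-(2 * ((a * b) ^ 2 - t ^ 4) / t ^ 3)) t := by
  have h := (((hasDerivAt_pow 2 t).const_sub (a ^ 2)).mul
    ((hasDerivAt_pow 2 t).const_sub (b ^ 2))).div (hasDerivAt_pow 2 t) (pow_ne_zero 2 ht)
  refine h.congr_deriv ?_
  simp only [Pi.mul_apply]
  field_simp
  ring

lemma image_kahaneMap {a b : ℝ} (ha : 0 < a) (hb : 0 < b) :
    kahaneMap a b '' Ioo 0 (min a b) = Ioi 0 := by
  ext x
  refine ⟨?_, fun hx ↦ ?_⟩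
  · rintro ⟨t, ⟨ht, htm⟩, rfl⟩
    rw [kahaneMap_eq_mul ht.ne']
    exact mul_pos (sq_div_sub_pos ht (htm.trans_le (min_le_left a b)))
      (sq_div_sub_pos ht (htm.trans_le (min_le_right a b)))
  · set m := min a b
    have hm : 0 < m := lt_min ha hb
    have hm2 : (a ^ 2 - m ^ 2) * (b ^ 2 - m ^ 2) = 0 := by
      rcases min_choice a b with h | h <;> simp [m, h]
    -- this numerator of `kahaneMap a b t - x` is `(ab)²` at `0` and `-x m²` at `m`
    obtain ⟨t, ⟨ht, htm⟩, hzero⟩ :=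
      intermediate_value_Ioo' (f := fun t ↦ (a ^ 2 - t ^ 2) * (b ^ 2 - t ^ 2) - x * t ^ 2)
        hm.le (by fun_prop)
        (show (0 : ℝ) ∈ Ioo _ _ from
          ⟨by nlinarith [mul_pos hx (pow_pos hm 2)], by simp; positivity⟩)
    refine ⟨t, ⟨ht, htm⟩, ?_⟩
    rw [kahaneMap, div_eq_iff (pow_ne_zero 2 ht.ne')]
    linarith

lemma sq_lt_mul_of_lt_min {a b t : ℝ} (ht : 0 < t) (htm : t < min a b) : t ^ 2 < a * b := by
  have := htm.trans_le (min_le_left a b)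
  have := htm.trans_le (min_le_right a b)
  nlinarith

lemma integral_Ioi_eq_integral_kahaneMap {a b : ℝ} (ha : 0 < a) (hb : 0 < b) (g : ℝ → ℂ) :
    ∫ x in Ioi 0, g x
      = ∫ t in Ioo 0 (min a b), (2 * ((a * b) ^ 2 - t ^ 4) / t ^ 3) • g (kahaneMap a b t) := by
  rw [← image_kahaneMap ha hb, integral_image_eq_integral_abs_deriv_smul measurableSet_Ioo
    (fun t ht ↦ (hasDerivAt_kahaneMap a b ht.1.ne').hasDerivWithinAt)
    (strictAntiOn_kahaneMap a b).injOn]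
  refine setIntegral_congr_fun measurableSet_Ioo fun t ⟨ht, htm⟩ ↦ ?_
  have : t ^ 4 < (a * b) ^ 2 := by
    have := sq_lt_mul_of_lt_min ht htm
    nlinarith
  rw [abs_neg, abs_of_pos (div_pos (mul_pos two_pos (sub_pos.2 this)) (pow_pos ht 3))]

/-- The pointwise identity behind the substitution `x = kahaneMap a b t`, for independent positive
atoms: it is then linear in their logarithms. -/
lemma kahane_integrand_identity {t α β K c D : ℝ} (ht : 0 < t) (hα : 0 < α) (hβ : 0 < β)
    (hK : 0 < K) (hc : 0 < c) (hD : 0 < D) (τ : ℝ) (υ : ℂ) :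
    ((D / t ^ 3 : ℝ) : ℂ) * (((α * β / t ^ 2 : ℝ) : ℂ) ^ (-(τ : ℂ))
      * ((K * c ^ 2 / t ^ 2 : ℝ) : ℂ) ^ (-(υ + 1)))
    = ((D / c ^ 2 : ℝ) : ℂ) / (K : ℂ) ^ (υ + 1) * ((t ^ 2 / c : ℝ) : ℂ) ^ υ
      * ((t ^ (2 * τ - 1) / (α ^ τ * β ^ τ) : ℝ) : ℂ) / (c : ℂ) ^ υ := by
  simp (disch := positivity) only [ofReal_cpow_eq_exp_log]
  simp (disch := positivity) only [ofReal_eq_exp_log]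
  simp (disch := positivity) only [Real.log_mul, Real.log_div, Real.log_pow, Real.log_rpow]
  simp only [div_eq_mul_inv, ← Complex.exp_neg, ← Complex.exp_add]
  congr 1
  push_cast
  ring

lemma integral_kahane_integrand {a b u : ℝ} (ha : 0 < a) (hb : 0 < b) (hu : |u| ≤ 1) (τ : ℝ)
    (υ : ℂ) :
    ∫ t in Ioo 0 (min a b),
        ((1 - (t^2/(a*b))^2 : ℝ) : ℂ)
          / ((1 + (t^2/(a*b))^2 - 2*(t^2/(a*b))*u : ℝ) : ℂ) ^ (υ + 1)
        * ((t^2/(a*b) : ℝ) : ℂ) ^ υ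
        * ((t ^ (2*τ - 1) / ((a^2 - t^2) ^ τ * (b^2 - t^2) ^ τ) : ℝ) : ℂ)
      = ((a * b : ℝ) : ℂ) ^ υ / 2 * ∫ x in Ioi (0 : ℝ),
          (x : ℂ) ^ (-(τ : ℂ)) * ((a^2 + b^2 - 2*a*b*u + x : ℝ) : ℂ) ^ (-(υ + 1)) := by
  rw [integral_Ioi_eq_integral_kahaneMap ha hb, ← integral_const_mul]
  refine setIntegral_congr_fun measurableSet_Ioo fun t ⟨ht, htm⟩ ↦ ?_
  have hta := htm.trans_le (min_le_left a b)
  have htb := htm.trans_le (min_le_right a b)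
  have htab := sq_lt_mul_of_lt_min ht htm
  have hs : t ^ 2 / (a * b) < 1 := (div_lt_one (by positivity)).2 htab
  have hK : 0 < 1 + (t ^ 2 / (a * b)) ^ 2 - 2 * (t ^ 2 / (a * b)) * u := by
    have : 0 ≤ t ^ 2 / (a * b) := by positivity
    nlinarith [pow_pos (sub_pos.2 hs) 2, mul_nonneg this (sub_nonneg.2 (abs_le.mp hu).2)]
  have hsum : a ^ 2 + b ^ 2 - 2 * a * b * u + kahaneMap a b t
      = (1 + (t ^ 2 / (a * b)) ^ 2 - 2 * (t ^ 2 / (a * b)) * u) * (a * b) ^ 2 / t ^ 2 := by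
    unfold kahaneMap
    field_simp
    ring
  have hone : 1 - (t ^ 2 / (a * b)) ^ 2 = ((a * b) ^ 2 - t ^ 4) / (a * b) ^ 2 := by
    field_simp
  have hjacobian : ((2 * ((a * b) ^ 2 - t ^ 4) / t ^ 3 : ℝ) : ℂ)
      = 2 * (((((a * b) ^ 2 - t ^ 4) / t ^ 3 : ℝ)) : ℂ) := by
    push_cast
    ring
  rw [hsum, hone, real_smul, kahaneMap, hjacobian, mul_assoc (2 : ℂ),
    kahane_integrand_identity ht (by nlinarith) (by nlinarith) hK (by positivity) (by nlinarith)]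
  have hW : ((a * b : ℝ) : ℂ) ^ υ ≠ 0 := by
    rw [ofReal_cpow_eq_exp_log (by positivity)]
    exact Complex.exp_ne_zero _
  field_simp

lemma Gamma_mul_Gamma_div_Gamma_mul_sin_mul_betaIntegral {τ : ℝ} (hτ : τ ∈ Ioo 0 1) {υ : ℂ}
    (hυ : 0 < ((τ : ℂ) + υ).re) :
    Complex.Gamma τ * Complex.Gamma (υ + 1) / Complex.Gamma (τ + υ)
      * ((2 * Real.sin (τ * π) / π : ℝ) : ℂ) * betaIntegral (1 - τ) (τ + υ) = 2 := by
  have hp : 0 < (1 - (τ : ℂ)).re := by simpa using hτ.2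
  have hsin : Complex.sin (π * τ) ≠ 0 := by
    rw [← ofReal_mul, ← ofReal_sin, mul_comm]
    exact ofReal_ne_zero.2 (Real.sin_pos_of_pos_of_lt_pi (by nlinarith [hτ.1, pi_pos])
      (by nlinarith [hτ.2, pi_pos])).ne'
  rw [betaIntegral_eq_Gamma_mul_div _ _ hp hυ, show 1 - (τ : ℂ) + (τ + υ) = υ + 1 by ring]
  have hreflect := (eq_div_iff hsin).1 (Gamma_mul_Gamma_one_sub (τ : ℂ))
  have h1 : Complex.Gamma (τ + υ) ≠ 0 := Gamma_ne_zero_of_re_pos hυ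
  have h2 : Complex.Gamma (υ + 1) ≠ 0 :=
    Gamma_ne_zero_of_re_pos (by simp at hυ ⊢; linarith [hτ.2])
  push_cast
  field_simp
  rw [mul_comm (τ : ℂ)]
  linear_combination hreflect

/-- Kahane's identity: for positive reals `a ≠ b`, `τ ∈ (0,1)`, `υ ∈ ℂ` with `Re υ ≥ 0`,
and `|u| ≤ 1`,
`(ab)^υ / (a² + b² − 2ab u)^{τ+υ}
  = (Γ(τ)Γ(υ+1)/Γ(τ+υ)) (2 sin(τπ)/π)
    ∫₀^{min(a,b)} [(1−(t²/ab)²)/(1+(t²/ab)²−2(t²/ab)u)^{υ+1}] (t²/ab)^υ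
      t^{2τ−1} / ((a²−t²)^τ (b²−t²)^τ) dt`. -/
theorem kahane_identity (a b τ u : ℝ) (υ : ℂ) (ha : 0 < a) (hb : 0 < b) (hab : a ≠ b)
    (hτ : τ ∈ Set.Ioo (0:ℝ) 1) (hυ : 0 ≤ υ.re) (hu : |u| ≤ 1) :
    ((a * b : ℝ) : ℂ) ^ υ / ((a^2 + b^2 - 2*a*b*u : ℝ) : ℂ) ^ ((τ : ℂ) + υ)
      = Complex.Gamma (τ : ℂ) * Complex.Gamma (υ + 1) / Complex.Gamma ((τ : ℂ) + υ)
        * ((2 * Real.sin (τ * π) / π : ℝ) : ℂ)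
        * ∫ t in (0:ℝ)..min a b,
            ((1 - (t^2/(a*b))^2 : ℝ) : ℂ)
              / ((1 + (t^2/(a*b))^2 - 2*(t^2/(a*b))*u : ℝ) : ℂ) ^ (υ + 1)
            * ((t^2/(a*b) : ℝ) : ℂ) ^ υ
            * ((t ^ (2*τ - 1) / ((a^2 - t^2) ^ τ * (b^2 - t^2) ^ τ) : ℝ) : ℂ) := by
  have hA : 0 < a^2 + b^2 - 2*a*b*u := by
    nlinarith [mul_pos ha hb, (abs_le.mp hu).2, sq_pos_of_ne_zero (sub_ne_zero.2 hab)]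
  have hq : 0 < ((τ : ℂ) + υ).re := by simpa using add_pos_of_pos_of_nonneg hτ.1 hυ
  have hbeta := integral_Ioi_cpow_mul_add_cpow hA (1 - τ) (τ + υ)
  rw [sub_sub_cancel_left, show 1 - (τ : ℂ) + (τ + υ) = υ + 1 by ring] at hbeta
  rw [intervalIntegral.integral_of_le (lt_min ha hb).le, integral_Ioc_eq_integral_Ioo,
    integral_kahane_integrand ha hb hu, hbeta, cpow_neg]
  linear_combination
    -(((a * b : ℝ) : ℂ) ^ υ / 2 * (((a^2 + b^2 - 2*a*b*u : ℝ) : ℂ) ^ ((τ : ℂ) + υ))⁻¹)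
      * Gamma_mul_Gamma_div_Gamma_mul_sin_mul_betaIntegral hτ hq
end

section
/- Let q ≥ 0 be a real number and let ρ be a real number with 0 ≤ ρ < 1. Then ∫₀^π sin^{2q}(ξ) / (1 + ρ² − 2ρ·cos ξ)^{q+1} dξ = (1/(1 − ρ²)) · √π · Γ(q + 1/2) / Γ(q + 1). -/
/-!
Let `D(ξ) = 1 + ρ² - 2ρ cos ξ = |e^{iξ} - ρ|²`, and let `θ(ξ)`, `φ(ξ)` be the angles at the
vertices `ρ` and `e^{iξ}` of the triangle `0, ρ, e^{iξ}`. Then `sin θ = sin ξ / √D`, and by the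
law of sines `sin φ = ρ sin θ`, while `θ' + φ' = (1 - ρ²) / D`. Hence, with `S` a primitive of
`sin^{2q}`, the function `S ∘ θ + ρ^{-2q} S ∘ φ` is a primitive of
`(1 - ρ²) sin^{2q} ξ / D^{q+1}`. As `ξ` runs from `0` to `π`, `θ` runs from `0` to `π` and `φ`
returns to `0`, so `(1 - ρ²)` times the integral is the Wallis integral `∫₀^π sin^{2q}`. That one
becomes a Beta integral under `x = sin²(ξ/2)`, and Legendre's duplication formula turns
`B(q + 1/2, q + 1/2)` into `√π Γ(q + 1/2) / (4^q Γ(q + 1))`.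
-/

open Real MeasureTheory Set

theorem integral_rpow_mul_one_sub_rpow {a b : ℝ} (ha : 0 < a) (hb : 0 < b) :
    ∫ x in (0:ℝ)..1, x ^ (a - 1) * (1 - x) ^ (b - 1) = Gamma a * Gamma b / Gamma (a + b) := by
  apply Complex.ofReal_injective
  have hβ := Complex.betaIntegral_eq_Gamma_mul_div a b (by simpa) (by simpa)
  rw [Complex.betaIntegral] at hβ
  push_cast
  rw [← Complex.Gamma_ofReal, ← Complex.Gamma_ofReal, ← Complex.Gamma_ofReal, Complex.ofReal_add,
    ← hβ, ← intervalIntegral.integral_ofReal]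
  refine intervalIntegral.integral_congr fun x hx => ?_
  rw [uIcc_of_le zero_le_one] at hx
  push_cast
  rw [Complex.ofReal_cpow hx.1, Complex.ofReal_cpow (sub_nonneg.2 hx.2)]
  push_cast
  rfl

theorem continuous_sin_rpow {p : ℝ} (hp : 0 ≤ p) : Continuous fun x => sin x ^ p :=
  (continuous_rpow_const hp).comp continuous_sin

theorem sin_eq_two_mul_sin_half_mul_cos_half (x : ℝ) :
    sin x = 2 * sin (x / 2) * cos (x / 2) := by
  rw [← sin_two_mul, mul_div_cancel₀ x two_ne_zero]

theorem sin_sq_half_rpow_mul_one_sub_sin_sq_half_rpow {ξ : ℝ} (hξ : 0 < sin ξ) (q : ℝ) :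
    (sin (ξ / 2) ^ 2) ^ (q - 1/2) * (1 - sin (ξ / 2) ^ 2) ^ (q - 1/2) * (sin ξ / 2)
      = (sin ξ / 2) ^ (2 * q) := by
  have hprod : sin (ξ / 2) ^ 2 * (1 - sin (ξ / 2) ^ 2) = (sin ξ / 2) ^ 2 := by
    rw [← cos_sq', sin_eq_two_mul_sin_half_mul_cos_half ξ]
    ring
  rw [← mul_rpow (by positivity) (by nlinarith [sin_sq_add_cos_sq (ξ / 2)]), hprod,
    ← rpow_natCast, ← rpow_mul (by positivity), ← rpow_add_one (by positivity)]
  congr 1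
  push_cast
  ring

theorem integral_sin_rpow_two_mul_eq_two_rpow_mul_beta (q : ℝ) :
    ∫ ξ in 0..π, sin ξ ^ (2 * q)
      = 2 ^ (2 * q) * ∫ x in (0:ℝ)..1, x ^ (q - 1/2) * (1 - x) ^ (q - 1/2) := by
  have hderiv (ξ : ℝ) : HasDerivAt (fun ξ => sin (ξ / 2) ^ 2) (sin ξ / 2) ξ := by
    refine (((hasDerivAt_id ξ).div_const 2).sin.pow 2).congr_deriv ?_
    simp only [id, sin_eq_two_mul_sin_half_mul_cos_half ξ]
    ring
  have hπ : min 0 π = 0 ∧ max 0 π = π := ⟨min_eq_left pi_pos.le, max_eq_right pi_pos.le⟩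
  have hsubst := intervalIntegral.integral_comp_mul_deriv_of_deriv_nonneg
    (f := fun ξ => sin (ξ / 2) ^ 2) (g := fun x => x ^ (q - 1/2) * (1 - x) ^ (q - 1/2))
    (by fun_prop) (fun ξ _ => hderiv ξ) fun ξ hξ => div_nonneg
      (sin_nonneg_of_nonneg_of_le_pi (hπ.1 ▸ hξ.1.le) (hπ.2 ▸ hξ.2.le)) zero_le_two
  simp only [zero_div, sin_zero, sin_pi_div_two, one_pow, ne_eq, OfNat.ofNat_ne_zero,
    not_false_eq_true, zero_pow] at hsubst
  rw [← hsubst, ← intervalIntegral.integral_const_mul]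
  refine intervalIntegral.integral_congr_Ioo_of_le pi_pos.le fun ξ hξ => ?_
  have hsin := sin_pos_of_pos_of_lt_pi hξ.1 hξ.2
  simp only [Function.comp_apply, sin_sq_half_rpow_mul_one_sub_sin_sq_half_rpow hsin,
    div_rpow hsin.le zero_le_two]
  field_simp

theorem integral_sin_rpow_two_mul {q : ℝ} (hq : -1/2 < q) :
    ∫ ξ in 0..π, sin ξ ^ (2 * q) = √π * Gamma (q + 1/2) / Gamma (q + 1) := by
  have hβ := integral_rpow_mul_one_sub_rpow (a := q + 1/2) (b := q + 1/2)
    (by linarith) (by linarith)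
  have hlegendre := Gamma_mul_Gamma_add_half (q + 1/2)
  rw [show q + 1/2 - 1 = q - 1/2 by ring] at hβ
  rw [show q + 1/2 + 1/2 = q + 1 by ring, show 2 * (q + 1/2) = q + 1/2 + (q + 1/2) by ring,
    show 1 - (q + 1/2 + (q + 1/2)) = -(2 * q) by ring, rpow_neg zero_le_two] at hlegendre
  have hGc : 0 < Gamma (q + 1/2 + (q + 1/2)) := Gamma_pos_of_pos (by linarith)
  have hG : 0 < Gamma (q + 1) := Gamma_pos_of_pos (by linarith)
  have hinv : (2:ℝ) ^ (2 * q) * ((2:ℝ) ^ (2 * q))⁻¹ = 1 := mul_inv_cancel₀ (by positivity)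
  rw [integral_sin_rpow_two_mul_eq_two_rpow_mul_beta, hβ, mul_div_assoc',
    div_eq_div_iff hGc.ne' hG.ne']
  linear_combination (2 ^ (2 * q) * Gamma (q + 1/2)) * hlegendre
    + (Gamma (q + 1/2) * Gamma (q + 1/2 + (q + 1/2)) * √π) * hinv

/-- For `y ≥ 0`, the polar angle of the point `(x, y)`; for `y > 0` it is `π/2 - arctan (x / y)`,
but unlike that expression it extends continuously to `y = 0`. -/
noncomputable def polarAngle (x y : ℝ) : ℝ := arccos (x / √(x ^ 2 + y ^ 2))

section PolarAngle

variable {x y : ℝ}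

theorem polarAngle_zero_right_of_pos (hx : 0 < x) : polarAngle x 0 = 0 := by
  rw [polarAngle, zero_pow two_ne_zero, add_zero, sqrt_sq hx.le, div_self hx.ne', arccos_one]

theorem polarAngle_zero_right_of_neg (hx : x < 0) : polarAngle x 0 = π := by
  rw [polarAngle, zero_pow two_ne_zero, add_zero, sqrt_sq_eq_abs, abs_of_neg hx,
    div_neg, div_self hx.ne, arccos_neg_one]

theorem sin_polarAngle (hy : 0 ≤ y) (hxy : x ^ 2 + y ^ 2 ≠ 0) :
    sin (polarAngle x y) = y / √(x ^ 2 + y ^ 2) := by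
  have hN : 0 < x ^ 2 + y ^ 2 := lt_of_le_of_ne (by positivity) hxy.symm
  rw [polarAngle, sin_arccos, ← sqrt_sq (by positivity : 0 ≤ y / √(x ^ 2 + y ^ 2))]
  congr 1
  rw [div_pow, div_pow, sq_sqrt hN.le]
  field_simp
  ring

theorem Continuous.polarAngle {X : Type*} [TopologicalSpace X] {f g : X → ℝ}
    (hf : Continuous f) (hg : Continuous g) (hfg : ∀ t, f t ^ 2 + g t ^ 2 ≠ 0) :
    Continuous fun t => _root_.polarAngle (f t) (g t) :=
  continuous_arccos.comp <| hf.div (by fun_prop) fun t => (sqrt_pos.2 <|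
    lt_of_le_of_ne (by positivity) (hfg t).symm).ne'

theorem HasDerivAt.polarAngle {f g : ℝ → ℝ} {f' g' x : ℝ} (hf : HasDerivAt f f' x)
    (hg : HasDerivAt g g' x) (hgx : 0 < g x) :
    HasDerivAt (fun t => _root_.polarAngle (f t) (g t))
      ((f x * g' - g x * f') / (f x ^ 2 + g x ^ 2)) x := by
  have hN : 0 < f x ^ 2 + g x ^ 2 := by positivity
  set r := √(f x ^ 2 + g x ^ 2)
  have hr : 0 < r := sqrt_pos.2 hN
  have hr2 : r ^ 2 = f x ^ 2 + g x ^ 2 := sq_sqrt hN.le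
  have hsin : 1 - (f x / r) ^ 2 = (g x / r) ^ 2 := by
    field_simp
    linarith
  have hlt : (f x / r) ^ 2 < 1 := by nlinarith [div_pos hgx hr]
  have hsum : HasDerivAt (fun t => f t ^ 2 + g t ^ 2) (2 * f x * f' + 2 * g x * g') x :=
    ((hf.pow 2).add (hg.pow 2)).congr_deriv (by simp)
  have hu : HasDerivAt (fun t => f t / √(f t ^ 2 + g t ^ 2))
      ((f' * r - f x * ((2 * f x * f' + 2 * g x * g') / (2 * r))) / r ^ 2) x :=
    hf.div (hsum.sqrt hN.ne') hr.ne'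
  refine ((hasDerivAt_arccos (x := f x / r) (by nlinarith) (by nlinarith)).comp x hu).congr_deriv ?_
  rw [hsin, sqrt_sq (div_pos hgx hr).le, ← hr2]
  field_simp
  linear_combination -f' * hr2

end PolarAngle

theorem hasDerivAt_integral_sin_rpow_polarAngle {q : ℝ} (hq : 0 ≤ q) {f g : ℝ → ℝ}
    {f' g' x : ℝ} (hf : HasDerivAt f f' x) (hg : HasDerivAt g g' x) (hgx : 0 < g x) :
    HasDerivAt (fun t => ∫ u in 0..polarAngle (f t) (g t), sin u ^ (2 * q))
      (g x ^ (2 * q) * (f x * g' - g x * f') / (f x ^ 2 + g x ^ 2) ^ (q + 1)) x := by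
  have hN : 0 < f x ^ 2 + g x ^ 2 := by positivity
  have hS := (continuous_sin_rpow (by positivity : 0 ≤ 2 * q)).integral_hasStrictDerivAt 0
    (polarAngle (f x) (g x)) |>.hasDerivAt
  refine (hS.comp x (hf.polarAngle hg hgx)).congr_deriv ?_
  rw [sin_polarAngle hgx.le hN.ne', div_rpow hgx.le (sqrt_nonneg _), sqrt_eq_rpow,
    ← rpow_mul hN.le, rpow_add_one hN.ne']
  field_simp

theorem one_add_sq_sub_two_mul_mul_cos_pos {ρ : ℝ} (hρ : |ρ| < 1) (ξ : ℝ) :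
    0 < 1 + ρ ^ 2 - 2 * ρ * cos ξ := by
  have h : ρ * cos ξ ≤ |ρ| :=
    calc ρ * cos ξ ≤ |ρ * cos ξ| := le_abs_self _
      _ = |ρ| * |cos ξ| := abs_mul _ _
      _ ≤ |ρ| := mul_le_of_le_one_right (abs_nonneg _) (abs_cos_le_one ξ)
  nlinarith [sq_abs ρ]

theorem cos_sub_sq_add_sin_sq (ρ ξ : ℝ) :
    (cos ξ - ρ) ^ 2 + sin ξ ^ 2 = 1 + ρ ^ 2 - 2 * ρ * cos ξ := by
  linear_combination sin_sq_add_cos_sq ξ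

theorem one_sub_mul_cos_sq_add_mul_sin_sq (ρ ξ : ℝ) :
    (1 - ρ * cos ξ) ^ 2 + (ρ * sin ξ) ^ 2 = 1 + ρ ^ 2 - 2 * ρ * cos ξ := by
  linear_combination ρ ^ 2 * sin_sq_add_cos_sq ξ

/-- `S (θ ξ) + ρ ^ (-2q) * S (φ ξ)`, where `S` is the primitive of `sin ^ (2q)` vanishing at `0`,
and `θ ξ`, `φ ξ` are the angles at `ρ` and at `e^{iξ}` of the triangle `0, ρ, e^{iξ}`. -/
noncomputable def landkofPrimitive (q ρ ξ : ℝ) : ℝ :=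
  (∫ u in 0..polarAngle (cos ξ - ρ) (sin ξ), sin u ^ (2 * q))
    + ρ ^ (-(2 * q)) * ∫ u in 0..polarAngle (1 - ρ * cos ξ) (ρ * sin ξ), sin u ^ (2 * q)

section LandkofPrimitive

variable {q ρ : ℝ}

theorem landkofPrimitive_zero (hρ : ρ < 1) : landkofPrimitive q ρ 0 = 0 := by
  simp only [landkofPrimitive, cos_zero, sin_zero, mul_zero, mul_one,
    polarAngle_zero_right_of_pos (sub_pos.2 hρ), intervalIntegral.integral_same, add_zero]

theorem landkofPrimitive_pi (hρ : -1 < ρ) :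
    landkofPrimitive q ρ π = ∫ u in 0..π, sin u ^ (2 * q) := by
  simp only [landkofPrimitive, cos_pi, sin_pi, mul_zero, mul_neg_one, sub_neg_eq_add,
    polarAngle_zero_right_of_neg (by linarith : -1 - ρ < 0),
    polarAngle_zero_right_of_pos (by linarith : 0 < 1 + ρ), intervalIntegral.integral_same,
    add_zero]

theorem continuous_landkofPrimitive (hq : 0 ≤ q) (hρ : |ρ| < 1) :
    Continuous (landkofPrimitive q ρ) := by
  have hS : Continuous fun t => ∫ u in 0..t, sin u ^ (2 * q) :=
    intervalIntegral.continuous_primitive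
      (continuous_sin_rpow (by positivity : 0 ≤ 2 * q)).intervalIntegrable 0
  have hD := one_add_sq_sub_two_mul_mul_cos_pos hρ
  refine (hS.comp ?_).add (continuous_const.mul (hS.comp ?_))
  · exact Continuous.polarAngle (by fun_prop) (by fun_prop)
      fun ξ => (cos_sub_sq_add_sin_sq ρ ξ ▸ hD ξ).ne'
  · exact Continuous.polarAngle (by fun_prop) (by fun_prop)
      fun ξ => (one_sub_mul_cos_sq_add_mul_sin_sq ρ ξ ▸ hD ξ).ne'

theorem hasDerivAt_landkofPrimitive (hq : 0 ≤ q) (hρ : 0 < ρ) {ξ : ℝ} (hξ : 0 < sin ξ) :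
    HasDerivAt (landkofPrimitive q ρ)
      ((1 - ρ ^ 2) * (sin ξ ^ (2 * q) / (1 + ρ ^ 2 - 2 * ρ * cos ξ) ^ (q + 1))) ξ := by
  have hθ := hasDerivAt_integral_sin_rpow_polarAngle hq ((hasDerivAt_cos ξ).sub_const ρ)
    (hasDerivAt_sin ξ) hξ
  have hφ := hasDerivAt_integral_sin_rpow_polarAngle hq
    (((hasDerivAt_cos ξ).const_mul ρ).const_sub 1) ((hasDerivAt_sin ξ).const_mul ρ)
    (mul_pos hρ hξ)
  refine (hθ.add (hφ.const_mul (ρ ^ (-(2 * q))))).congr_deriv ?_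
  have hD : 0 < 1 + ρ ^ 2 - 2 * ρ * cos ξ := cos_sub_sq_add_sin_sq ρ ξ ▸ by positivity
  have hDq := rpow_pos_of_pos hD (q + 1)
  have hρq := rpow_pos_of_pos hρ (2 * q)
  rw [cos_sub_sq_add_sin_sq, one_sub_mul_cos_sq_add_mul_sin_sq, mul_rpow hρ.le hξ.le,
    rpow_neg hρ.le]
  field_simp
  congr 1
  linear_combination (1 - ρ ^ 2) * sin_sq_add_cos_sq ξ

end LandkofPrimitive

theorem one_sub_sq_mul_integral_sin_rpow_div_rpow {q ρ : ℝ} (hq : 0 ≤ q) (hρ0 : 0 < ρ)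
    (hρ1 : ρ < 1) :
    (1 - ρ ^ 2) * ∫ ξ in 0..π, sin ξ ^ (2 * q) / (1 + ρ ^ 2 - 2 * ρ * cos ξ) ^ (q + 1)
      = ∫ ξ in 0..π, sin ξ ^ (2 * q) := by
  have hρ : |ρ| < 1 := abs_lt.2 ⟨by linarith, hρ1⟩
  have hD := one_add_sq_sub_two_mul_mul_cos_pos hρ
  have hcont : Continuous fun ξ =>
      (1 - ρ ^ 2) * (sin ξ ^ (2 * q) / (1 + ρ ^ 2 - 2 * ρ * cos ξ) ^ (q + 1)) :=
    continuous_const.mul <| (continuous_sin_rpow (by positivity)).div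
      ((by fun_prop : Continuous _).rpow_const fun ξ => Or.inl (hD ξ).ne')
      fun ξ => (rpow_pos_of_pos (hD ξ) _).ne'
  rw [← intervalIntegral.integral_const_mul,
    intervalIntegral.integral_eq_sub_of_hasDerivAt_of_le pi_pos.le
      (continuous_landkofPrimitive hq hρ).continuousOn
      (fun ξ hξ => hasDerivAt_landkofPrimitive hq hρ0 (sin_pos_of_pos_of_lt_pi hξ.1 hξ.2))
      (hcont.intervalIntegrable _ _),
    landkofPrimitive_pi (by linarith), landkofPrimitive_zero hρ1, sub_zero]

/-- For real `q ≥ 0` and `0 ≤ ρ < 1`,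
`∫₀^π sin^{2q} ξ / (1 + ρ² − 2ρ cos ξ)^{q+1} dξ = (1/(1−ρ²)) √π Γ(q+1/2)/Γ(q+1)`. -/
theorem landkof_type_integral (q ρ : ℝ) (hq : 0 ≤ q) (hρ0 : 0 ≤ ρ) (hρ1 : ρ < 1) :
    (∫ ξ in (0:ℝ)..π, Real.sin ξ ^ (2*q) / (1 + ρ^2 - 2*ρ*Real.cos ξ) ^ (q + 1))
      = 1 / (1 - ρ^2) * (Real.sqrt π * Real.Gamma (q + 1/2) / Real.Gamma (q + 1)) := by
  rw [← integral_sin_rpow_two_mul (by linarith)]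
  rcases hρ0.eq_or_lt with rfl | hρ0
  · simp
  · rw [← one_sub_sq_mul_integral_sin_rpow_div_rpow hq hρ0 hρ1]
    have : 1 - ρ ^ 2 ≠ 0 := by nlinarith
    field_simp
end

section
/- Let p ≥ 2 be a real number and let ρ > 1 be a real number. Then ∫₀^π sin^{p−2}(ξ) / (1 + ρ² − 2ρ·cos ξ)^{p/2} dξ = (1 / (ρ^{p−2}(ρ² − 1))) · ∫₀^π sin^{p−2}(ξ) dξ. -/
/-! The substitution `ξ = π - β - arcsin (sin β / ρ)` comes from the triangle with sides `1`, `ρ`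
enclosing the angle `ξ`, where `β` is the angle opposite to `ρ`: its third side is
`√(1 + ρ² - 2ρ cos ξ) = √(ρ² - sin² β) + cos β =: S β + cos β`, and the law of sines gives
`sin ξ = sin β (S β + cos β) / ρ`. After the substitution the integrand becomes
`sin^{p-2} β / (ρ^{p-2} S β (S β + cos β))`; averaging it with its reflection under `β ↦ π - β`
replaces `1 / (S (S + cos β))` by `1 / (ρ² - 1)`, since `(S + cos β)(S - cos β) = ρ² - 1`. -/

open Real MeasureTheory

noncomputable def sqrtSqSubSinSq (ρ β : ℝ) : ℝ := √(ρ ^ 2 - sin β ^ 2)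

noncomputable def landkofSubst (ρ β : ℝ) : ℝ := π - β - arcsin (sin β / ρ)

variable {ρ : ℝ}

theorem continuous_sqrtSqSubSinSq : Continuous (sqrtSqSubSinSq ρ) :=
  (continuous_const.sub (continuous_sin.pow 2)).sqrt

theorem landkofSubst_zero : landkofSubst ρ 0 = π := by
  simp [landkofSubst]

theorem landkofSubst_pi : landkofSubst ρ π = 0 := by
  simp [landkofSubst]

section

variable (hρ : 1 < ρ)

include hρ

theorem sqrtSqSubSinSq_sq (β : ℝ) : sqrtSqSubSinSq ρ β ^ 2 = ρ ^ 2 - sin β ^ 2 :=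
  sq_sqrt (by nlinarith [sin_sq_le_one β])

theorem add_cos_mul_sub_cos_eq (β : ℝ) :
    (sqrtSqSubSinSq ρ β + cos β) * (sqrtSqSubSinSq ρ β - cos β) = ρ ^ 2 - 1 := by
  linear_combination sqrtSqSubSinSq_sq hρ β - sin_sq_add_cos_sq β

theorem abs_cos_lt_sqrtSqSubSinSq (β : ℝ) : |cos β| < sqrtSqSubSinSq ρ β := by
  refine abs_lt_of_sq_lt_sq ?_ (sqrt_nonneg _)
  nlinarith [add_cos_mul_sub_cos_eq hρ β]

theorem sqrtSqSubSinSq_pos (β : ℝ) : 0 < sqrtSqSubSinSq ρ β :=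
  (abs_nonneg _).trans_lt (abs_cos_lt_sqrtSqSubSinSq hρ β)

theorem sqrtSqSubSinSq_add_cos_pos (β : ℝ) : 0 < sqrtSqSubSinSq ρ β + cos β := by
  linarith [neg_abs_le (cos β), abs_cos_lt_sqrtSqSubSinSq hρ β]

theorem sqrtSqSubSinSq_sub_cos_pos (β : ℝ) : 0 < sqrtSqSubSinSq ρ β - cos β := by
  linarith [le_abs_self (cos β), abs_cos_lt_sqrtSqSubSinSq hρ β]

theorem sqrt_one_sub_sin_div_sq (β : ℝ) :
    √(1 - (sin β / ρ) ^ 2) = sqrtSqSubSinSq ρ β / ρ := by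
  have hρ0 : 0 < ρ := by linarith
  rw [show 1 - (sin β / ρ) ^ 2 = (ρ ^ 2 - sin β ^ 2) / ρ ^ 2 by field_simp,
    sqrt_div' _ (by positivity), sqrt_sq hρ0.le, sqrtSqSubSinSq]

theorem abs_sin_div_lt_one (β : ℝ) : |sin β / ρ| < 1 := by
  rw [abs_div, abs_of_pos (by linarith : 0 < ρ), div_lt_one (by linarith)]
  linarith [abs_sin_le_one β]

theorem hasDerivAt_landkofSubst (β : ℝ) :
    HasDerivAt (landkofSubst ρ)
      (-((sqrtSqSubSinSq ρ β + cos β) / sqrtSqSubSinSq ρ β)) β := by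
  obtain ⟨h₁, h₂⟩ := abs_lt.mp (abs_sin_div_lt_one hρ β)
  have harcsin := (hasDerivAt_arcsin h₁.ne' h₂.ne).comp β ((hasDerivAt_sin β).div_const ρ)
  refine (((hasDerivAt_id β).const_sub π).sub harcsin).congr_deriv ?_
  rw [sqrt_one_sub_sin_div_sq hρ]
  field_simp [(sqrtSqSubSinSq_pos hρ β).ne', (by linarith : ρ ≠ 0)]
  ring

theorem sin_landkofSubst (β : ℝ) :
    sin (landkofSubst ρ β) = sin β * (sqrtSqSubSinSq ρ β + cos β) / ρ := by
  obtain ⟨h₁, h₂⟩ := abs_lt.mp (abs_sin_div_lt_one hρ β)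
  rw [landkofSubst, sub_sub, sin_pi_sub, sin_add, sin_arcsin h₁.le h₂.le, cos_arcsin,
    sqrt_one_sub_sin_div_sq hρ]
  ring

theorem one_add_sq_sub_cos_landkofSubst (β : ℝ) :
    1 + ρ ^ 2 - 2 * ρ * cos (landkofSubst ρ β) = (sqrtSqSubSinSq ρ β + cos β) ^ 2 := by
  obtain ⟨h₁, h₂⟩ := abs_lt.mp (abs_sin_div_lt_one hρ β)
  rw [landkofSubst, sub_sub, cos_pi_sub, cos_add, sin_arcsin h₁.le h₂.le, cos_arcsin,
    sqrt_one_sub_sin_div_sq hρ]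
  field_simp [(by linarith : ρ ≠ 0)]
  linear_combination (-1 : ℝ) * sqrtSqSubSinSq_sq hρ β - sin_sq_add_cos_sq β

theorem integral_comp_landkofSubst {G : ℝ → ℝ} (hG : Continuous G) :
    ∫ ξ in (0)..π, G ξ = ∫ β in (0)..π,
      G (landkofSubst ρ β) * ((sqrtSqSubSinSq ρ β + cos β) / sqrtSqSubSinSq ρ β) := by
  have hderiv_cont : Continuous fun β ↦
      -((sqrtSqSubSinSq ρ β + cos β) / sqrtSqSubSinSq ρ β) :=
    ((continuous_sqrtSqSubSinSq.add continuous_cos).div continuous_sqrtSqSubSinSq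
      (fun β ↦ (sqrtSqSubSinSq_pos hρ β).ne')).neg
  have hsubst := intervalIntegral.integral_comp_mul_deriv (a := 0) (b := π)
    (fun β _ ↦ hasDerivAt_landkofSubst hρ β) hderiv_cont.continuousOn hG
  rw [landkofSubst_zero, landkofSubst_pi, intervalIntegral.integral_symm 0 π] at hsubst
  simp only [Function.comp_apply, mul_neg, intervalIntegral.integral_neg, neg_inj] at hsubst
  exact hsubst.symm

theorem landkof_integrand_comp_landkofSubst (p : ℝ) {β : ℝ} (hβ : 0 ≤ sin β) :
    sin (landkofSubst ρ β) ^ (p - 2) / (1 + ρ ^ 2 - 2 * ρ * cos (landkofSubst ρ β)) ^ (p / 2)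
        * ((sqrtSqSubSinSq ρ β + cos β) / sqrtSqSubSinSq ρ β)
      = (ρ ^ (p - 2))⁻¹ *
          (sin β ^ (p - 2) / (sqrtSqSubSinSq ρ β * (sqrtSqSubSinSq ρ β + cos β))) := by
  set S := sqrtSqSubSinSq ρ β
  have hd : 0 < S + cos β := sqrtSqSubSinSq_add_cos_pos hρ β
  have hden : ((S + cos β) ^ 2) ^ (p / 2) = (S + cos β) ^ (p - 2) * (S + cos β) ^ 2 := by
    rw [← rpow_natCast, ← rpow_mul hd.le,
      show ((2 : ℕ) : ℝ) * (p / 2) = (p - 2) + (2 : ℕ) by push_cast; ring,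
      rpow_add_natCast hd.ne', rpow_natCast]
  rw [sin_landkofSubst hρ, one_add_sq_sub_cos_landkofSubst hρ, hden,
    div_rpow (mul_nonneg hβ hd.le) (by linarith), mul_rpow hβ hd.le]
  field_simp [(rpow_pos_of_pos hd (p - 2)).ne', (sqrtSqSubSinSq_pos hρ β).ne',
    (rpow_pos_of_pos (by linarith : 0 < ρ) (p - 2)).ne']

theorem inv_mul_add_cos_add_inv_mul_sub_cos (β : ℝ) :
    (sqrtSqSubSinSq ρ β * (sqrtSqSubSinSq ρ β + cos β))⁻¹
      + (sqrtSqSubSinSq ρ β * (sqrtSqSubSinSq ρ β - cos β))⁻¹ = 2 / (ρ ^ 2 - 1) := by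
  rw [← add_cos_mul_sub_cos_eq hρ β]
  field_simp [(sqrtSqSubSinSq_pos hρ β).ne', (sqrtSqSubSinSq_add_cos_pos hρ β).ne',
    (sqrtSqSubSinSq_sub_cos_pos hρ β).ne']
  ring

theorem integral_div_sqrtSqSubSinSq_mul_add_cos {f : ℝ → ℝ}
    (hf : IntervalIntegrable f volume 0 π) (hsymm : ∀ β, f (π - β) = f β) :
    ∫ β in (0)..π, f β / (sqrtSqSubSinSq ρ β * (sqrtSqSubSinSq ρ β + cos β))
      = 1 / (ρ ^ 2 - 1) * ∫ β in (0)..π, f β := by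
  have hplus : IntervalIntegrable
      (fun β ↦ f β / (sqrtSqSubSinSq ρ β * (sqrtSqSubSinSq ρ β + cos β))) volume 0 π :=
    hf.mul_continuousOn ((continuous_sqrtSqSubSinSq.mul
      (continuous_sqrtSqSubSinSq.add continuous_cos)).inv₀ fun β ↦
        (mul_pos (sqrtSqSubSinSq_pos hρ β) (sqrtSqSubSinSq_add_cos_pos hρ β)).ne').continuousOn
  have hminus : IntervalIntegrable
      (fun β ↦ f β / (sqrtSqSubSinSq ρ β * (sqrtSqSubSinSq ρ β - cos β))) volume 0 π :=
    hf.mul_continuousOn ((continuous_sqrtSqSubSinSq.mul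
      (continuous_sqrtSqSubSinSq.sub continuous_cos)).inv₀ fun β ↦
        (mul_pos (sqrtSqSubSinSq_pos hρ β) (sqrtSqSubSinSq_sub_cos_pos hρ β)).ne').continuousOn
  have hreflect : ∫ β in (0)..π, f β / (sqrtSqSubSinSq ρ β * (sqrtSqSubSinSq ρ β + cos β))
      = ∫ β in (0)..π, f β / (sqrtSqSubSinSq ρ β * (sqrtSqSubSinSq ρ β - cos β)) := by
    have h := intervalIntegral.integral_comp_sub_left (a := 0) (b := π)
      (fun β ↦ f β / (sqrtSqSubSinSq ρ β * (sqrtSqSubSinSq ρ β - cos β))) π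
    rw [sub_self, sub_zero] at h
    rw [← h]
    simp only [hsymm, sqrtSqSubSinSq, sin_pi_sub, cos_pi_sub, sub_neg_eq_add]
  have hsum : (∫ β in (0)..π, f β / (sqrtSqSubSinSq ρ β * (sqrtSqSubSinSq ρ β + cos β)))
      + ∫ β in (0)..π, f β / (sqrtSqSubSinSq ρ β * (sqrtSqSubSinSq ρ β - cos β))
      = 2 / (ρ ^ 2 - 1) * ∫ β in (0)..π, f β := by
    rw [← intervalIntegral.integral_add hplus hminus, ← intervalIntegral.integral_const_mul]
    simp only [div_eq_mul_inv, ← mul_add, inv_mul_add_cos_add_inv_mul_sub_cos hρ, mul_comm]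
  rw [← hreflect] at hsum
  linear_combination hsum / 2

end

/-- For real `p ≥ 2` and `ρ > 1`,
`∫₀^π sin^{p−2} ξ / (1 + ρ² − 2ρ cos ξ)^{p/2} dξ
  = (1/(ρ^{p−2}(ρ²−1))) ∫₀^π sin^{p−2} ξ dξ`. -/
theorem landkof_integral (p ρ : ℝ) (hp : 2 ≤ p) (hρ : 1 < ρ) :
    (∫ ξ in (0:ℝ)..π, Real.sin ξ ^ (p - 2) / (1 + ρ^2 - 2*ρ*Real.cos ξ) ^ (p/2))
      = 1 / (ρ ^ (p - 2) * (ρ^2 - 1)) * ∫ ξ in (0:ℝ)..π, Real.sin ξ ^ (p - 2) := by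
  have hsin : Continuous fun ξ ↦ sin ξ ^ (p - 2) :=
    continuous_sin.rpow_const fun _ ↦ Or.inr (by linarith)
  have hden_pos (ξ : ℝ) : 0 < 1 + ρ ^ 2 - 2 * ρ * cos ξ := by nlinarith [cos_le_one ξ]
  have hintegrand : Continuous fun ξ ↦ sin ξ ^ (p - 2) / (1 + ρ ^ 2 - 2 * ρ * cos ξ) ^ (p / 2) :=
    hsin.div ((by fun_prop : Continuous fun ξ ↦ 1 + ρ ^ 2 - 2 * ρ * cos ξ).rpow_const
      fun ξ ↦ Or.inl (hden_pos ξ).ne') fun ξ ↦ (rpow_pos_of_pos (hden_pos ξ) _).ne'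
  calc _ = ∫ β in (0)..π, (ρ ^ (p - 2))⁻¹ *
        (sin β ^ (p - 2) / (sqrtSqSubSinSq ρ β * (sqrtSqSubSinSq ρ β + cos β))) := by
        rw [integral_comp_landkofSubst hρ hintegrand]
        refine intervalIntegral.integral_congr fun β hβ ↦ ?_
        rw [Set.uIcc_of_le pi_pos.le] at hβ
        exact landkof_integrand_comp_landkofSubst hρ p (sin_nonneg_of_nonneg_of_le_pi hβ.1 hβ.2)
    _ = _ := by
        rw [intervalIntegral.integral_const_mul, integral_div_sqrtSqSubSinSq_mul_add_cos hρ
          (hsin.intervalIntegrable 0 π) fun β ↦ by rw [sin_pi_sub],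
          ← mul_assoc, one_div, one_div, mul_inv]
end

section
/- Let d ≥ 3 be an integer and let ζ ∈ (0, π]. Then ∫₀^ζ sin^{d−3}(θ/2) · sin θ / √(cos θ − cos ζ) dθ = √2 · B((d−1)/2, 1/2) · sin^{d−2}(ζ/2), where B(a,b) = Γ(a)Γ(b)/Γ(a+b) is the Beta function. -/
open Real MeasureTheory

/-- The (complete) Beta function `B(a,b) = Γ(a)Γ(b)/Γ(a+b)`. -/
noncomputable def betaFn (a b : ℝ) : ℝ := Real.Gamma a * Real.Gamma b / Real.Gamma (a + b)

lemma real_beta_integral {a b : ℝ} (ha : 0 < a) (hb : 0 < b) :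
    ∫ v in (0:ℝ)..1, v ^ (a-1) * (1-v) ^ (b-1) = betaFn a b := by
  have h := Complex.Gamma_mul_Gamma_eq_betaIntegral (s := (a:ℂ)) (t := (b:ℂ))
    (by simpa using ha) (by simpa using hb)
  have hint : Complex.betaIntegral a b
      = ((∫ v in (0:ℝ)..1, v ^ (a-1) * (1-v) ^ (b-1) : ℝ) : ℂ) := by
    rw [Complex.betaIntegral, ← intervalIntegral.integral_ofReal]
    refine intervalIntegral.integral_congr fun x hx => ?_
    rw [Set.uIcc_of_le zero_le_one] at hx
    push_cast
    rw [Complex.ofReal_cpow hx.1 (a-1), Complex.ofReal_cpow (by linarith [hx.2] : (0:ℝ) ≤ 1 - x) (b-1)]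
    push_cast
    ring
  rw [hint, ← Complex.ofReal_add, Complex.Gamma_ofReal, Complex.Gamma_ofReal,
    Complex.Gamma_ofReal, ← Complex.ofReal_mul, ← Complex.ofReal_mul] at h
  have h' : Real.Gamma a * Real.Gamma b
      = Real.Gamma (a+b) * ∫ v in (0:ℝ)..1, v ^ (a-1) * (1-v) ^ (b-1) := by
    exact_mod_cast h
  have hGab : Real.Gamma (a+b) ≠ 0 := (Real.Gamma_pos_of_pos (by linarith)).ne'
  rw [betaFn, h', mul_comm, mul_div_assoc, div_self hGab, mul_one]

set_option maxHeartbeats 1000000 in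
/-- For an integer `d ≥ 3` and `ζ ∈ (0, π]`,
`∫₀^ζ sin^{d−3}(θ/2) sin θ / √(cos θ − cos ζ) dθ = √2 · B((d−1)/2, 1/2) · sin^{d−2}(ζ/2)`. -/
theorem abel_integral_north (d : ℕ) (hd : 3 ≤ d) (ζ : ℝ) (hζ0 : 0 < ζ) (hζπ : ζ ≤ π) :
    (∫ θ in (0:ℝ)..ζ,
        Real.sin (θ/2) ^ ((d:ℝ) - 3) * Real.sin θ / Real.sqrt (Real.cos θ - Real.cos ζ))
      = Real.sqrt 2 * betaFn (((d:ℝ) - 1)/2) (1/2) * Real.sin (ζ/2) ^ ((d:ℝ) - 2) := by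
  have hπ : (0:ℝ) < π := Real.pi_pos
  have hd3 : (3:ℝ) ≤ (d:ℝ) := by exact_mod_cast hd
  set s : ℝ := Real.sin (ζ/2) with hs_def
  have hs0 : 0 < s := Real.sin_pos_of_pos_of_lt_pi (by linarith) (by linarith)
  set g : ℝ → ℝ := fun u => 2 * Real.sqrt 2 * u ^ ((d:ℝ)-2) / Real.sqrt (s^2 - u^2) with hg_def
  have h22 : Real.sqrt 2 * Real.sqrt 2 = 2 := Real.mul_self_sqrt (by norm_num)
  have hsqrt2 : (0:ℝ) < Real.sqrt 2 := Real.sqrt_pos.mpr two_pos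
  -- first substitution u = sin (θ/2)
  have φmem : ∀ θ ∈ Set.Ioo (0:ℝ) ζ, θ/2 ∈ Set.Icc (-(π/2)) (π/2) := by
    intro θ hθ
    constructor
    · linarith [hθ.1]
    · linarith [hθ.2]
  have hζmem : ζ/2 ∈ Set.Icc (-(π/2)) (π/2) := by constructor <;> linarith
  have himg : (fun θ => Real.sin (θ/2)) '' Set.Ioo 0 ζ = Set.Ioo 0 s := by
    apply Set.Subset.antisymm
    · rintro u ⟨θ, hθ, rfl⟩
      refine ⟨Real.sin_pos_of_pos_of_lt_pi (by linarith [hθ.1]) (by linarith [hθ.2]), ?_⟩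
      exact Real.strictMonoOn_sin (φmem θ hθ) hζmem (by linarith [hθ.2])
    · have := intermediate_value_Ioo (f := fun θ : ℝ => Real.sin (θ/2)) hζ0.le
        (Continuous.continuousOn (by continuity))
      simpa using this
  have hderiv : ∀ θ ∈ Set.Ioo (0:ℝ) ζ, HasDerivWithinAt (fun θ => Real.sin (θ/2))
      (Real.cos (θ/2) * (1/2)) (Set.Ioo 0 ζ) θ := by
    intro θ _
    exact ((Real.hasDerivAt_sin (θ/2)).comp θ ((hasDerivAt_id θ).div_const 2)).hasDerivWithinAt
  have hinj : Set.InjOn (fun θ => Real.sin (θ/2)) (Set.Ioo 0 ζ) := by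
    intro x hx y hy h
    have := Real.injOn_sin (φmem x hx) (φmem y hy) h
    linarith
  have step1 : ∫ u in Set.Ioo 0 s, g u
      = ∫ θ in Set.Ioo 0 ζ, |Real.cos (θ/2) * (1/2)| • g (Real.sin (θ/2)) := by
    rw [← himg]
    exact integral_image_eq_integral_abs_deriv_smul measurableSet_Ioo hderiv hinj g
  have step2 : ∫ θ in Set.Ioo 0 ζ, |Real.cos (θ/2) * (1/2)| • g (Real.sin (θ/2))
      = ∫ θ in Set.Ioo 0 ζ,
          Real.sin (θ/2) ^ ((d:ℝ) - 3) * Real.sin θ / Real.sqrt (Real.cos θ - Real.cos ζ) := by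
    refine setIntegral_congr_fun measurableSet_Ioo fun θ hθ => ?_
    have hθ0 : 0 < θ := hθ.1
    have hθζ : θ < ζ := hθ.2
    have hu0 : 0 < Real.sin (θ/2) := Real.sin_pos_of_pos_of_lt_pi (by linarith) (by linarith)
    have hc0 : 0 < Real.cos (θ/2) := Real.cos_pos_of_mem_Ioo ⟨by linarith, by linarith⟩
    set u := Real.sin (θ/2) with hu_def
    set c := Real.cos (θ/2) with hc_def
    have hus : u < s := Real.strictMonoOn_sin (φmem θ hθ) hζmem (by linarith)
    have hsinθ : Real.sin θ = 2 * u * c := by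
      rw [show θ = 2 * (θ/2) by ring, Real.sin_two_mul]
    have hcosθ : Real.cos θ - Real.cos ζ = 2 * (s^2 - u^2) := by
      have h1 : Real.cos θ = 1 - 2 * u^2 := by
        rw [show θ = 2 * (θ/2) by ring, Real.cos_two_mul']
        have h := Real.sin_sq_add_cos_sq (θ/2)
        rw [← hu_def, ← hc_def] at h ⊢
        linarith
      have h2 : Real.cos ζ = 1 - 2 * s^2 := by
        rw [show ζ = 2 * (ζ/2) by ring, Real.cos_two_mul']
        have h := Real.sin_sq_add_cos_sq (ζ/2)
        rw [← hs_def] at h ⊢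
        linarith
      rw [h1, h2]; ring
    have hsu : 0 < s^2 - u^2 := by nlinarith
    have hX : 0 < Real.sqrt (s^2 - u^2) := Real.sqrt_pos.mpr hsu
    have hupow : u ^ ((d:ℝ) - 3) * u = u ^ ((d:ℝ) - 2) := by
      calc u ^ ((d:ℝ)-3) * u = u ^ ((d:ℝ)-3) * u ^ (1:ℝ) := by rw [Real.rpow_one]
        _ = u ^ ((d:ℝ)-3+1) := (Real.rpow_add hu0 _ _).symm
        _ = u ^ ((d:ℝ)-2) := by congr 1; ring
    simp only [smul_eq_mul, hg_def]
    rw [hsinθ, hcosθ, abs_of_pos (by positivity : (0:ℝ) < c * (1/2)),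
      Real.sqrt_mul (by norm_num : (0:ℝ) ≤ 2)]
    rw [mul_div_assoc']
    rw [div_eq_div_iff (by positivity) (by positivity)]
    linear_combination (c * u ^ ((d:ℝ)-2) * Real.sqrt (s^2-u^2)) * h22
      - 2 * c * Real.sqrt (s^2-u^2) * hupow
  -- second substitution u = s √v
  set a : ℝ := ((d:ℝ)-1)/2 with ha_def
  have ha : 0 < a := by rw [ha_def]; linarith
  have ψimg : (fun v => s * Real.sqrt v) '' Set.Ioo 0 1 = Set.Ioo 0 s := by
    apply Set.Subset.antisymm
    · rintro u ⟨v, hv, rfl⟩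
      have hw0 : 0 < Real.sqrt v := Real.sqrt_pos.mpr hv.1
      have hw1 : Real.sqrt v < 1 := by
        have := Real.sqrt_lt_sqrt hv.1.le hv.2
        simpa using this
      refine ⟨mul_pos hs0 hw0, ?_⟩
      show s * Real.sqrt v < s
      nlinarith
    · have := intermediate_value_Ioo (f := fun v : ℝ => s * Real.sqrt v) zero_le_one
        (Continuous.continuousOn (continuous_const.mul Real.continuous_sqrt))
      simpa using this
  have ψderiv : ∀ v ∈ Set.Ioo (0:ℝ) 1, HasDerivWithinAt (fun v => s * Real.sqrt v)
      (s * (1 / (2 * Real.sqrt v))) (Set.Ioo 0 1) v := fun v hv =>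
    ((Real.hasDerivAt_sqrt hv.1.ne').const_mul s).hasDerivWithinAt
  have ψinj : Set.InjOn (fun v => s * Real.sqrt v) (Set.Ioo (0:ℝ) 1) := by
    intro x hx y hy h
    have h' : Real.sqrt x = Real.sqrt y := mul_left_cancel₀ hs0.ne' h
    calc x = Real.sqrt x ^ 2 := (Real.sq_sqrt hx.1.le).symm
      _ = Real.sqrt y ^ 2 := by rw [h']
      _ = y := Real.sq_sqrt hy.1.le
  have step3 : ∫ u in Set.Ioo 0 s, g u
      = ∫ v in Set.Ioo (0:ℝ) 1, |s * (1 / (2 * Real.sqrt v))| • g (s * Real.sqrt v) := by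
    rw [← ψimg]
    exact integral_image_eq_integral_abs_deriv_smul measurableSet_Ioo ψderiv ψinj g
  have step4 : ∫ v in Set.Ioo (0:ℝ) 1, |s * (1 / (2 * Real.sqrt v))| • g (s * Real.sqrt v)
      = ∫ v in Set.Ioo (0:ℝ) 1,
          (Real.sqrt 2 * s ^ ((d:ℝ)-2)) * (v ^ (a-1) * (1-v) ^ ((1/2:ℝ)-1)) := by
    refine setIntegral_congr_fun measurableSet_Ioo fun v hv => ?_
    have hv0 : 0 < v := hv.1
    have hv1 : v < 1 := hv.2
    have h1v : 0 < 1 - v := by linarith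
    have hw0 : 0 < Real.sqrt v := Real.sqrt_pos.mpr hv0
    have hA : (s * Real.sqrt v) ^ ((d:ℝ)-2) = s ^ ((d:ℝ)-2) * v ^ (((d:ℝ)-2)/2) := by
      rw [Real.mul_rpow hs0.le (Real.sqrt_nonneg v), Real.sqrt_eq_rpow,
        ← Real.rpow_mul hv0.le]
      congr 1
      ring
    have hB : Real.sqrt (s^2 - (s * Real.sqrt v)^2) = s * Real.sqrt (1-v) := by
      rw [mul_pow, Real.sq_sqrt hv0.le, show s^2 - s^2*v = s^2*(1-v) by ring,
        Real.sqrt_mul (sq_nonneg s), Real.sqrt_sq hs0.le]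
    have hC : (1-v) ^ ((1/2:ℝ)-1) = (Real.sqrt (1-v))⁻¹ := by
      rw [show (1/2:ℝ)-1 = -(1/2) by norm_num, Real.rpow_neg h1v.le, Real.sqrt_eq_rpow]
    have hD : v ^ (a-1) = v ^ (((d:ℝ)-2)/2) / Real.sqrt v := by
      rw [Real.sqrt_eq_rpow, ← Real.rpow_sub hv0]
      congr 1
      rw [ha_def]; ring
    have hY : 0 < Real.sqrt (1-v) := Real.sqrt_pos.mpr h1v
    simp only [smul_eq_mul, hg_def]
    rw [hA, hB, hC, hD, abs_of_pos (by positivity : (0:ℝ) < s * (1 / (2 * Real.sqrt v)))]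
    field_simp
  have step5 : ∫ v in Set.Ioo (0:ℝ) 1,
        (Real.sqrt 2 * s ^ ((d:ℝ)-2)) * (v ^ (a-1) * (1-v) ^ ((1/2:ℝ)-1))
      = Real.sqrt 2 * s ^ ((d:ℝ)-2) * betaFn a (1/2) := by
    rw [integral_const_mul]
    congr 1
    rw [← MeasureTheory.integral_Ioc_eq_integral_Ioo,
      ← intervalIntegral.integral_of_le zero_le_one]
    exact real_beta_integral ha (by norm_num)
  rw [intervalIntegral.integral_of_le hζ0.le, MeasureTheory.integral_Ioc_eq_integral_Ioo,
    ← step2, ← step1, step3, step4, step5]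
  ring
end

section
/- Let d ≥ 3 be an integer and let 0 ≤ η < α ≤ π with η < π. Then ∫_η^α cos^{d−2}(ζ/2) · sin ζ / √(cos η − cos ζ) dζ = √2 · cos^{d−1}(η/2) · B((cos η − cos α)/(1 + cos η); 1/2, d/2). -/
open Real MeasureTheory

/-- The incomplete Beta function `B(z; a, b) = ∫₀^z t^{a−1}(1−t)^{b−1} dt`. -/
noncomputable def incBeta (z a b : ℝ) : ℝ := ∫ t in (0:ℝ)..z, t ^ (a - 1) * (1 - t) ^ (b - 1)

set_option maxHeartbeats 1000000 in
/-- For an integer `d ≥ 3` and `0 ≤ η < α ≤ π` with `η < π`,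
`∫_η^α cos^{d−2}(ζ/2) sin ζ / √(cos η − cos ζ) dζ
  = √2 · cos^{d−1}(η/2) · B((cos η − cos α)/(1 + cos η); 1/2, d/2)`. -/
theorem abel_integral_incBeta (d : ℕ) (hd : 3 ≤ d) (η α : ℝ) (h0 : 0 ≤ η) (h1 : η < α)
    (h2 : α ≤ π) (h3 : η < π) :
    (∫ ζ in η..α,
        Real.cos (ζ/2) ^ ((d:ℝ) - 2) * Real.sin ζ / Real.sqrt (Real.cos η - Real.cos ζ))
      = Real.sqrt 2 * Real.cos (η/2) ^ ((d:ℝ) - 1)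
        * incBeta ((Real.cos η - Real.cos α)/(1 + Real.cos η)) (1/2) ((d:ℝ)/2) := by
  have hπ : (0:ℝ) < π := Real.pi_pos
  set c : ℝ := 1 + Real.cos η with hc_def
  have hη_mem : η ∈ Set.Icc 0 π := ⟨h0, h3.le⟩
  have hα_mem : α ∈ Set.Icc 0 π := ⟨h0.trans h1.le, h2⟩
  have hcosη : Real.cos π < Real.cos η := Real.strictAntiOn_cos hη_mem ⟨hπ.le, le_refl π⟩ h3
  rw [Real.cos_pi] at hcosη
  have hc : 0 < c := by simp only [hc_def]; linarith
  have hcosα : Real.cos α < Real.cos η := Real.strictAntiOn_cos hη_mem hα_mem h1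
  set z : ℝ := (Real.cos η - Real.cos α) / c with hz_def
  have hz : 0 < z := div_pos (by linarith) hc
  set f : ℝ → ℝ := fun x => (Real.cos η - Real.cos x) / c with hf_def
  set g : ℝ → ℝ := fun t => t ^ ((1:ℝ)/2 - 1) * (1 - t) ^ ((d:ℝ)/2 - 1) with hg_def
  -- monotonicity of f on Icc η α
  have hmono : StrictMonoOn f (Set.Icc η α) := by
    intro a ha b hb hab
    have ha' : a ∈ Set.Icc 0 π := ⟨h0.trans ha.1, ha.2.trans h2⟩
    have hb' : b ∈ Set.Icc 0 π := ⟨h0.trans hb.1, hb.2.trans h2⟩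
    have : Real.cos b < Real.cos a := Real.strictAntiOn_cos ha' hb' hab
    simp only [hf_def]
    gcongr
  have hcont : ContinuousOn f (Set.Icc η α) := by
    apply ContinuousOn.div_const
    exact (continuous_const.sub Real.continuous_cos).continuousOn
  have hfη : f η = 0 := by simp [hf_def]
  have hfα : f α = z := rfl
  -- image of Ioo
  have himg : f '' Set.Ioo η α = Set.Ioo 0 z := by
    apply Set.Subset.antisymm
    · rintro _ ⟨x, hx, rfl⟩
      constructor
      · rw [← hfη]
        exact hmono ⟨le_refl η, h1.le⟩ ⟨hx.1.le, hx.2.le⟩ hx.1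
      · rw [← hfα]
        exact hmono ⟨hx.1.le, hx.2.le⟩ ⟨h1.le, le_refl α⟩ hx.2
    · have := intermediate_value_Ioo h1.le hcont
      rw [hfη, hfα] at this
      exact this
  -- derivative
  have hderiv : ∀ x ∈ Set.Ioo η α, HasDerivWithinAt f (Real.sin x / c) (Set.Ioo η α) x := by
    intro x hx
    have h : HasDerivAt f (Real.sin x / c) x := by
      have := ((Real.hasDerivAt_cos x).const_sub (Real.cos η)).div_const c
      simpa using this
    exact h.hasDerivWithinAt
  have hinj : Set.InjOn f (Set.Ioo η α) :=
    (hmono.injOn).mono Set.Ioo_subset_Icc_self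
  -- change of variables
  have hcov := integral_image_eq_integral_abs_deriv_smul measurableSet_Ioo hderiv hinj g
  rw [himg] at hcov
  -- rewrite both sides as Ioo integrals
  have hrhs : incBeta z (1/2) ((d:ℝ)/2) = ∫ t in Set.Ioo 0 z, g t := by
    rw [incBeta, intervalIntegral.integral_of_le hz.le, MeasureTheory.integral_Ioc_eq_integral_Ioo]
  rw [hrhs, hcov, intervalIntegral.integral_of_le h1.le,
    MeasureTheory.integral_Ioc_eq_integral_Ioo, ← integral_const_mul]
  apply MeasureTheory.setIntegral_congr_fun measurableSet_Ioo
  intro x hx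
  -- pointwise identity
  have hx0 : 0 < x := lt_of_le_of_lt h0 hx.1
  have hxπ : x < π := lt_of_lt_of_le hx.2 h2
  have hs : 0 < Real.sin x := Real.sin_pos_of_pos_of_lt_pi hx0 hxπ
  have hcosx : -1 < Real.cos x := by
    have := Real.strictAntiOn_cos ⟨hx0.le, hxπ.le⟩ ⟨hπ.le, le_refl π⟩ hxπ
    rwa [Real.cos_pi] at this
  have hcosx' : Real.cos x < Real.cos η :=
    Real.strictAntiOn_cos hη_mem ⟨hx0.le, hxπ.le⟩ hx.1
  have hu : 0 < Real.cos (x/2) := by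
    apply Real.cos_pos_of_mem_Ioo
    constructor <;> [linarith; linarith]
  have hv : 0 < Real.cos (η/2) := by
    apply Real.cos_pos_of_mem_Ioo
    constructor <;> [linarith; linarith]
  set u := Real.cos (x/2) with hu_def
  set v := Real.cos (η/2) with hv_def
  have hu2 : u ^ 2 = (1 + Real.cos x) / 2 := by
    have := Real.cos_sq (x/2)
    rw [hu_def]
    rw [this]
    rw [show 2 * (x/2) = x by ring]
    ring
  have hv2 : v ^ 2 = c / 2 := by
    have := Real.cos_sq (η/2)
    rw [hv_def, this, show 2 * (η/2) = η by ring, hc_def]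
    ring
  set t := f x with ht_def
  have ht : 0 < t := div_pos (by linarith) hc
  have ht1 : t < 1 := by
    rw [ht_def, hf_def]
    rw [div_lt_one hc]
    simp only [hc_def]
    linarith
  have h1t : 1 - t = u ^ 2 / v ^ 2 := by
    rw [hu2, hv2, ht_def, hf_def]
    field_simp
    ring
  have hcc : Real.cos η - Real.cos x = t * (2 * v ^ 2) := by
    rw [hv2, ht_def, hf_def]
    field_simp
  show u ^ ((d:ℝ) - 2) * Real.sin x / Real.sqrt (Real.cos η - Real.cos x)
      = Real.sqrt 2 * v ^ ((d:ℝ) - 1) * (|Real.sin x / c| • g t)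
  rw [smul_eq_mul, abs_of_pos (div_pos hs hc)]
  rw [hcc, Real.sqrt_mul ht.le, Real.sqrt_mul (by norm_num : (0:ℝ) ≤ 2),
    Real.sqrt_sq hv.le]
  have hg1 : t ^ ((1:ℝ)/2 - 1) = (Real.sqrt t)⁻¹ := by
    rw [show (1:ℝ)/2 - 1 = -(1/2) by norm_num, Real.rpow_neg ht.le, ← Real.sqrt_eq_rpow]
  have hg2 : (1 - t) ^ ((d:ℝ)/2 - 1) = u ^ ((d:ℝ) - 2) / v ^ ((d:ℝ) - 2) := by
    rw [h1t, ← div_pow, ← Real.rpow_natCast (u/v) 2, ← Real.rpow_mul (by positivity)]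
    push_cast
    rw [show (2:ℝ) * ((d:ℝ)/2 - 1) = (d:ℝ) - 2 by ring, Real.div_rpow hu.le hv.le]
  have hv3 : v ^ ((d:ℝ) - 1) = v ^ ((d:ℝ) - 2) * v := by
    rw [show (d:ℝ) - 1 = ((d:ℝ) - 2) + 1 by ring, Real.rpow_add hv, Real.rpow_one]
  rw [hg_def]
  simp only []
  rw [hg1, hg2, hv3]
  have hV : 0 < v ^ ((d:ℝ) - 2) := Real.rpow_pos_of_pos hv _
  have hst : 0 < Real.sqrt t := Real.sqrt_pos.mpr ht
  have hs2 : Real.sqrt 2 > 0 := by positivity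
  have hsq2 : Real.sqrt 2 * Real.sqrt 2 = 2 := Real.mul_self_sqrt (by norm_num)
  have hcv : c = 2 * v ^ 2 := by rw [hv2]; ring
  rw [hcv]
  field_simp
  ring_nf
  rw [Real.sq_sqrt (by norm_num : (0:ℝ) ≤ 2)]
end

section
/- Let d ≥ 3 be an integer and let z be a real number with 0 < z < 1. Then ((d−1)/2) · B(z; 1/2, d/2) + z^{−1/2}(1−z)^{d/2} = z^{−1/2}(1−z)^{d/2} · ₂F₁(1, (d−1)/2; 1/2; z). -/
open Real MeasureTheory

/-- The Pochhammer symbol `(a)_n = a(a+1)⋯(a+n−1)`, with `(a)_0 = 1`. -/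
noncomputable def poch (a : ℝ) (n : ℕ) : ℝ := ∏ i ∈ Finset.range n, (a + i)

/-- The Gauss hypergeometric function `₂F₁(a,b;c;z) = Σₙ ((a)ₙ(b)ₙ/(c)ₙ) zⁿ/n!`. -/
noncomputable def hyp2F1 (a b c z : ℝ) : ℝ :=
  ∑' n : ℕ, poch a n * poch b n / poch c n * z ^ n / (n.factorial : ℝ)

/-!
Integrating `d/dt [t^a (1-t)^q]` over `[0, z]` gives the recurrence
`a B(z; a, q) = z^a (1-z)^q + (a+q) B(z; a+1, q)`. Applied with `q = b + 1/2` and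
`a = 1/2, 3/2, 5/2, …`, it peels the terms of `₂F₁(1, b; 1/2; z)` off `b B(z; 1/2, b + 1/2)`
one at a time, leaving a nonnegative remainder that is at most a constant times the next term.
So the partial sums of the (nonnegative) series are bounded, the series converges, its terms
tend to `0`, and with them the remainder.
-/

open intervalIntegral Filter Topology

lemma poch_succ (a : ℝ) (n : ℕ) : poch a (n + 1) = poch a n * (a + n) :=
  Finset.prod_range_succ _ _

lemma poch_pos {a : ℝ} (ha : 0 < a) (n : ℕ) : 0 < poch a n :=
  Finset.prod_pos fun _ _ => by positivity

lemma poch_div_poch_pos {a c : ℝ} (ha : 0 < a) (hc : 0 < c) (m n : ℕ) :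
    0 < poch a m / poch c n :=
  div_pos (poch_pos ha m) (poch_pos hc n)

lemma poch_one (n : ℕ) : poch 1 n = n.factorial := by
  induction n with
  | zero => simp [poch]
  | succ n ih => rw [poch_succ, ih, Nat.factorial_succ]; push_cast; ring

lemma hyp2F1_one_left (b c z : ℝ) :
    hyp2F1 1 b c z = ∑' n : ℕ, poch b n / poch c n * z ^ n := by
  refine tsum_congr fun n => ?_
  rw [poch_one]
  field_simp [(Nat.factorial_pos n).ne']

lemma intervalIntegrable_incBeta_integrand {z a : ℝ} (q : ℝ) (ha : 0 < a) (hz : z < 1) :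
    IntervalIntegrable (fun t => t ^ (a - 1) * (1 - t) ^ (q - 1)) volume 0 z := by
  refine (intervalIntegrable_rpow' (by linarith)).mul_continuousOn
    ((continuousOn_const.sub continuousOn_id).rpow_const fun t ht => Or.inl ?_)
  have : t < 1 := (Set.mem_uIcc.mp ht).elim (fun h => by linarith [h.2]) fun h => by linarith [h.2]
  exact sub_ne_zero.mpr this.ne'

lemma incBeta_nonneg {z : ℝ} (a q : ℝ) (hz0 : 0 ≤ z) (hz1 : z ≤ 1) : 0 ≤ incBeta z a q :=
  integral_nonneg hz0 fun t ht =>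
    mul_nonneg (Real.rpow_nonneg ht.1 _) (Real.rpow_nonneg (by linarith [ht.2]) _)

lemma incBeta_le {z a q : ℝ} (ha : 0 < a) (hq : 1 ≤ q) (hz0 : 0 ≤ z) (hz1 : z < 1) :
    incBeta z a q ≤ z ^ a / a := by
  calc incBeta z a q ≤ ∫ t in (0:ℝ)..z, t ^ (a - 1) :=
        integral_mono_on hz0 (intervalIntegrable_incBeta_integrand q ha hz1)
          (intervalIntegrable_rpow' (by linarith)) fun t ht =>
          mul_le_of_le_one_right (Real.rpow_nonneg ht.1 _)
            (Real.rpow_le_one (by linarith [ht.2]) (by linarith [ht.1]) (by linarith))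
    _ = z ^ a / a := by
        rw [integral_rpow (Or.inl (by linarith)), sub_add_cancel, Real.zero_rpow ha.ne', sub_zero]

lemma mul_incBeta_eq {z a : ℝ} (q : ℝ) (ha : 0 < a) (hz0 : 0 ≤ z) (hz1 : z < 1) :
    a * incBeta z a q = z ^ a * (1 - z) ^ q + (a + q) * incBeta z (a + 1) q := by
  have hint := intervalIntegrable_incBeta_integrand q ha hz1
  have hint' := intervalIntegrable_incBeta_integrand q (by linarith : 0 < a + 1) hz1
  have hcont : ContinuousOn (fun t => t ^ a * (1 - t) ^ q) (Set.Icc 0 z) :=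
    (continuousOn_id.rpow_const fun _ _ => Or.inr ha.le).mul
      ((continuousOn_const.sub continuousOn_id).rpow_const fun t ht =>
        Or.inl (ne_of_gt (show (0:ℝ) < 1 - t by linarith [ht.2])))
  have hderiv (t : ℝ) (ht : t ∈ Set.Ioo 0 z) : HasDerivAt (fun t => t ^ a * (1 - t) ^ q)
      (a * (t ^ (a - 1) * (1 - t) ^ (q - 1))
        - (a + q) * (t ^ (a + 1 - 1) * (1 - t) ^ (q - 1))) t := by
    have ht0 : t ≠ 0 := ht.1.ne'
    have ht1 : 1 - t ≠ 0 := sub_ne_zero.mpr (by linarith [ht.2])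
    refine ((Real.hasDerivAt_rpow_const (p := a) (Or.inl ht0)).mul
      (((hasDerivAt_id' t).const_sub 1).rpow_const (p := q) (Or.inl ht1))).congr_deriv ?_
    rw [add_sub_cancel_right, Real.rpow_sub_one ht0, Real.rpow_sub_one ht1]
    field_simp
    ring
  have hFTC := integral_eq_sub_of_hasDeriv_right_of_le hz0 hcont
    (fun t ht => (hderiv t ht).hasDerivWithinAt) ((hint.const_mul a).sub (hint'.const_mul (a + q)))
  rw [integral_sub (hint.const_mul a) (hint'.const_mul (a + q)),
    intervalIntegral.integral_const_mul, intervalIntegral.integral_const_mul,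
    Real.zero_rpow ha.ne', zero_mul, sub_zero] at hFTC
  rw [incBeta, incBeta]
  linarith

/-- The remainder `R_N` in the expansion
`b B(z; 1/2, b + 1/2) = z^{-1/2} (1-z)^{b+1/2} Σ_{n=1}^{N} ((b)_n / (1/2)_n) zⁿ + R_N`. -/
noncomputable def incBetaRemainder (b z : ℝ) (N : ℕ) : ℝ :=
  poch b (N + 1) / poch (1/2) N * incBeta z (N + 1/2) (b + 1/2)

lemma rpow_natCast_add_half {z : ℝ} (h0 : 0 < z) (N : ℕ) :
    z ^ ((N:ℝ) + 1/2) = z ^ (-(1:ℝ)/2) * z ^ (N + 1) := by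
  rw [← Real.rpow_natCast, ← Real.rpow_add h0]
  push_cast
  ring_nf

section Remainder

variable {b z : ℝ}

lemma incBetaRemainder_zero : incBetaRemainder b z 0 = b * incBeta z (1/2) (b + 1/2) := by
  simp [incBetaRemainder, poch]

lemma incBetaRemainder_sub_succ (h0 : 0 < z) (h1 : z < 1) (N : ℕ) :
    incBetaRemainder b z N - incBetaRemainder b z (N + 1)
      = z ^ (-(1:ℝ)/2) * (1 - z) ^ (b + 1/2)
          * (poch b (N + 1) / poch (1/2) (N + 1) * z ^ (N + 1)) := by
  have hrec := mul_incBeta_eq (b + 1/2) (by positivity : (0:ℝ) < N + 1/2) h0.le h1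
  have hpow := rpow_natCast_add_half h0 N
  have hidx : ((N + 1 : ℕ) : ℝ) + 1/2 = (N + 1/2) + 1 := by push_cast; ring
  have hpoch := (poch_pos (by norm_num : (0:ℝ) < 1/2) N).ne'
  have hN : (1/2 + N : ℝ) ≠ 0 := by positivity
  rw [incBetaRemainder, incBetaRemainder, hidx, poch_succ b (N + 1), poch_succ (1/2) N]
  rw [hpow] at hrec
  -- so that `field_simp` does not rewrite the exponents and the arguments of `incBeta`
  generalize incBeta z (N + 1/2) (b + 1/2) = I at hrec ⊢
  generalize incBeta z (N + 1/2 + 1) (b + 1/2) = I' at hrec ⊢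
  generalize z ^ (-(1:ℝ)/2) = s at hrec ⊢
  generalize (1 - z) ^ (b + 1/2) = v at hrec ⊢
  field_simp
  push_cast
  linear_combination (2 * poch b (N + 1)) * hrec

lemma incBetaRemainder_nonneg (hb : 0 < b) (h0 : 0 ≤ z) (h1 : z ≤ 1) (N : ℕ) :
    0 ≤ incBetaRemainder b z N :=
  mul_nonneg (poch_div_poch_pos hb (by norm_num) _ _).le (incBeta_nonneg _ _ h0 h1)

lemma incBetaRemainder_le (hb : 1/2 ≤ b) (h0 : 0 < z) (h1 : z < 1) (N : ℕ) :
    (1 - z) ^ (b + 1/2) * incBetaRemainder b z N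
      ≤ z ^ (-(1:ℝ)/2) * (1 - z) ^ (b + 1/2)
          * (poch b (N + 1) / poch (1/2) (N + 1) * z ^ (N + 1)) := by
  have hN : (0:ℝ) < N + 1/2 := by positivity
  have hcoeff := poch_div_poch_pos (a := b) (c := 1/2) (by linarith) (by norm_num) (N + 1) N
  have hpow := rpow_natCast_add_half h0 N
  calc (1 - z) ^ (b + 1/2) * incBetaRemainder b z N
      ≤ (1 - z) ^ (b + 1/2)
          * (poch b (N + 1) / poch (1/2) N * (z ^ ((N:ℝ) + 1/2) / (N + 1/2))) := by
        rw [incBetaRemainder]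
        gcongr
        exact incBeta_le hN (by linarith) h0.le h1
    _ = _ := by
        rw [hpow, poch_succ (1/2) N]
        field_simp
        ring

end Remainder

open Finset in
theorem mul_incBeta_add_eq_mul_hyp2F1 {b z : ℝ} (hb : 1/2 ≤ b) (h0 : 0 < z) (h1 : z < 1) :
    b * incBeta z (1/2) (b + 1/2) + z ^ (-(1:ℝ)/2) * (1 - z) ^ (b + 1/2)
      = z ^ (-(1:ℝ)/2) * (1 - z) ^ (b + 1/2) * hyp2F1 1 b (1/2) z := by
  set w := z ^ (-(1:ℝ)/2) * (1 - z) ^ (b + 1/2)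
  set R := incBetaRemainder b z
  set u : ℕ → ℝ := fun n => w * (poch b (n + 1) / poch (1/2) (n + 1) * z ^ (n + 1))
  have hv : 0 < (1 - z) ^ (b + 1/2) := Real.rpow_pos_of_pos (by linarith) _
  have hw : 0 < w := mul_pos (Real.rpow_pos_of_pos h0 _) hv
  have hpartial (N : ℕ) : ∑ n ∈ range N, u n = R 0 - R N := by
    rw [← sum_range_sub']
    exact sum_congr rfl fun n _ => (incBetaRemainder_sub_succ h0 h1 n).symm
  have hR_nonneg (N : ℕ) : 0 ≤ R N := incBetaRemainder_nonneg (by linarith) h0.le h1.le N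
  have hu_nonneg (n : ℕ) : 0 ≤ u n := mul_nonneg hw.le
    (mul_nonneg (poch_div_poch_pos (by linarith) (by norm_num) _ _).le (pow_nonneg h0.le _))
  have hu_summable : Summable u :=
    summable_of_sum_range_le hu_nonneg fun N => (hpartial N).trans_le (sub_le_self _ (hR_nonneg N))
  have hR_le (N : ℕ) : R N ≤ u N / (1 - z) ^ (b + 1/2) :=
    (le_div_iff₀' hv).2 (incBetaRemainder_le hb h0 h1 N)
  have hR_tendsto : Tendsto R atTop (𝓝 0) :=
    squeeze_zero hR_nonneg hR_le
      (by simpa only [zero_div] using hu_summable.tendsto_atTop_zero.div_const _)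
  have hu_hasSum : HasSum u (R 0) :=
    hu_summable.hasSum_iff_tendsto_nat.mpr
      (by simpa [hpartial] using tendsto_const_nhds.sub hR_tendsto)
  have hseries := HasSum.zero_add (f := fun n => w * (poch b n / poch (1/2) n * z ^ n)) hu_hasSum
  have hu0 : w * (poch b 0 / poch (1/2) 0 * z ^ 0) = w := by simp [poch]
  rw [hu0] at hseries
  have hR0 : R 0 = b * incBeta z (1/2) (b + 1/2) := incBetaRemainder_zero
  rw [hyp2F1_one_left, ← tsum_mul_left, hseries.tsum_eq, hR0, add_comm]

/-- For an integer `d ≥ 3` and `0 < z < 1`,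
`((d−1)/2) B(z; 1/2, d/2) + z^{−1/2}(1−z)^{d/2}
  = z^{−1/2}(1−z)^{d/2} ₂F₁(1, (d−1)/2; 1/2; z)`. -/
theorem incBeta_hyp2F1_identity (d : ℕ) (hd : 3 ≤ d) (z : ℝ) (h0 : 0 < z) (h1 : z < 1) :
    (((d:ℝ) - 1)/2) * incBeta z (1/2) ((d:ℝ)/2)
        + z ^ (-(1:ℝ)/2) * (1 - z) ^ ((d:ℝ)/2)
      = z ^ (-(1:ℝ)/2) * (1 - z) ^ ((d:ℝ)/2)
        * hyp2F1 1 (((d:ℝ) - 1)/2) (1/2) z := by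
  have hd' : (3:ℝ) ≤ d := by exact_mod_cast hd
  have hq : ((d:ℝ) - 1)/2 + 1/2 = (d:ℝ)/2 := by ring
  rw [← hq]
  exact mul_incBeta_add_eq_mul_hyp2F1 (by linarith) h0 h1
end

section
/- Let d ≥ 3 be an integer and let q > 0 be a real number. Then there exists a unique α ∈ (0, π) satisfying the equation (sin(α/2))^{−(d−1)} · B(cos²(α/2); (d−2)/2, d/2) − B(cos²(α/2); (d−2)/2, 1/2) = √π · Γ(d/2 − 1) / (q · 2^{(d−2)/2} · Γ((d−1)/2)). -/
/-!
Substituting `z = cos²(α/2)`, so that `sin²(α/2) = 1 - z`, turns the left-hand side into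
`g(z) = (1 - z)^(1/2 - b) B(z; a, b) - B(z; a, 1/2)` with `a = (d - 2)/2`, `b = d/2`.
In `g'` the two terms coming from the integrands cancel, because
`(1 - z)^(1/2 - b) (1 - z)^(b - 1) = (1 - z)^(-1/2)`, leaving
`(b - 1/2) (1 - z)^(-1/2 - b) B(z; a, b) > 0`. So `g` increases strictly on `[0, 1)` from
`g(0) = 0` to `+∞`, and takes the positive right-hand side exactly once; finally
`α ↦ cos²(α/2)` maps `(0, π)` bijectively onto `(0, 1)`.
-/

open Real MeasureTheory Set Filter Topology

section IncBeta

variable {a b : ℝ}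

lemma intervalIntegrable_betaIntegrand_zero_half (ha : 0 < a) (b : ℝ) :
    IntervalIntegrable (fun t : ℝ => t ^ (a - 1) * (1 - t) ^ (b - 1)) volume 0 (1/2) := by
  refine (intervalIntegral.intervalIntegrable_rpow' (by linarith)).mul_continuousOn ?_
  refine ContinuousOn.rpow_const (by fun_prop) fun t ht => Or.inl ?_
  rw [uIcc_of_le (by norm_num)] at ht
  linarith [ht.2]

lemma intervalIntegrable_betaIntegrand (ha : 0 < a) (hb : 0 < b) :
    IntervalIntegrable (fun t : ℝ => t ^ (a - 1) * (1 - t) ^ (b - 1)) volume 0 1 := by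
  refine (intervalIntegrable_betaIntegrand_zero_half ha b).trans ?_
  have h := (intervalIntegrable_betaIntegrand_zero_half hb a).comp_sub_left 1
  norm_num at h
  simpa only [mul_comm, sub_sub_cancel] using h.symm

lemma intervalIntegrable_betaIntegrand_of_mem_Icc (ha : 0 < a) (hb : 0 < b) {z : ℝ}
    (hz : z ∈ Icc 0 1) :
    IntervalIntegrable (fun t : ℝ => t ^ (a - 1) * (1 - t) ^ (b - 1)) volume 0 z :=
  (intervalIntegrable_betaIntegrand ha hb).mono_set <| by
    rw [uIcc_of_le hz.1, uIcc_of_le zero_le_one]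
    exact Icc_subset_Icc le_rfl hz.2

lemma incBeta_zero (a b : ℝ) : incBeta 0 a b = 0 :=
  intervalIntegral.integral_same

lemma incBeta_pos (ha : 0 < a) (hb : 0 < b) {z : ℝ} (hz : z ∈ Ioc 0 1) : 0 < incBeta z a b := by
  refine intervalIntegral.intervalIntegral_pos_of_pos_on
    (intervalIntegrable_betaIntegrand_of_mem_Icc ha hb (Ioc_subset_Icc_self hz))
    (fun t ht => ?_) hz.1
  have ht1 : 0 < 1 - t := by linarith [ht.2, hz.2]
  have ht0 : 0 < t := ht.1
  positivity

lemma continuousOn_incBeta (ha : 0 < a) (hb : 0 < b) :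
    ContinuousOn (fun z => incBeta z a b) (Icc 0 1) := by
  simpa only [incBeta, uIcc_of_le zero_le_one] using
    intervalIntegral.continuousOn_primitive_interval' (intervalIntegrable_betaIntegrand ha hb)
      left_mem_uIcc

lemma tendsto_incBeta_nhdsLT_one (ha : 0 < a) (hb : 0 < b) :
    Tendsto (fun z => incBeta z a b) (𝓝[<] 1) (𝓝 (incBeta 1 a b)) :=
  ((continuousOn_incBeta ha hb 1 ⟨zero_le_one, le_rfl⟩).mono_of_mem_nhdsWithin
    (Icc_mem_nhdsLT zero_lt_one)).tendsto

lemma hasDerivAt_incBeta (ha : 0 < a) (hb : 0 < b) {z : ℝ} (hz : z ∈ Ioo 0 1) :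
    HasDerivAt (fun z => incBeta z a b) (z ^ (a - 1) * (1 - z) ^ (b - 1)) z :=
  intervalIntegral.integral_hasDerivAt_right
    (intervalIntegrable_betaIntegrand_of_mem_Icc ha hb (Ioo_subset_Icc_self hz))
    (by fun_prop : Measurable _).stronglyMeasurable.stronglyMeasurableAtFilter
    (by fun_prop (disch := first | exact Or.inl hz.1.ne' | exact Or.inl (sub_pos.2 hz.2).ne'))

end IncBeta

lemma exists_mem_Ioo_eq_of_tendsto_atTop {f : ℝ → ℝ} {a b c : ℝ} (hab : a < b)
    (hf : ContinuousOn f (Ico a b)) (hlim : Tendsto f (𝓝[<] b) atTop) (hc : f a < c) :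
    ∃ x ∈ Ioo a b, f x = c := by
  obtain ⟨x₁, hx₁c, hx₁⟩ := ((hlim.eventually_gt_atTop c).and (Ioo_mem_nhdsLT hab)).exists
  obtain ⟨x, hx, rfl⟩ := intermediate_value_Ioc hx₁.1.le
    (hf.mono (Icc_subset_Ico_right hx₁.2)) ⟨hc, hx₁c.le⟩
  exact ⟨x, ⟨hx.1, hx.2.trans_lt hx₁.2⟩, rfl⟩

noncomputable def capEquationLHS (a b z : ℝ) : ℝ :=
  (1 - z) ^ (1/2 - b) * incBeta z a b - incBeta z a (1/2)

section CapEquation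

variable {a b : ℝ}

lemma capEquationLHS_zero (a b : ℝ) : capEquationLHS a b 0 = 0 := by
  simp [capEquationLHS, incBeta_zero]

lemma continuousOn_capEquationLHS (ha : 0 < a) (hb : 0 < b) :
    ContinuousOn (capEquationLHS a b) (Ico 0 1) := by
  have hB : ∀ b, 0 < b → ContinuousOn (fun z => incBeta z a b) (Ico 0 1) := fun b hb =>
    (continuousOn_incBeta ha hb).mono Ico_subset_Icc_self
  refine ((ContinuousOn.rpow_const (by fun_prop) fun z hz => Or.inl ?_).mul (hB b hb)).sub
    (hB _ one_half_pos)
  exact (sub_pos.2 hz.2).ne'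

lemma hasDerivAt_capEquationLHS (ha : 0 < a) (hb : 0 < b) {z : ℝ} (hz : z ∈ Ioo 0 1) :
    HasDerivAt (capEquationLHS a b) ((b - 1/2) * (1 - z) ^ (-1/2 - b) * incBeta z a b) z := by
  have hz1 : 0 < 1 - z := sub_pos.2 hz.2
  have hpow : HasDerivAt (fun z => (1 - z) ^ (1/2 - b))
      (-1 * (1/2 - b) * (1 - z) ^ (1/2 - b - 1)) z :=
    ((hasDerivAt_id z).const_sub 1).rpow_const (Or.inl hz1.ne')
  refine ((hpow.mul (hasDerivAt_incBeta ha hb hz)).sub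
    (hasDerivAt_incBeta ha one_half_pos hz)).congr_deriv ?_
  have hcancel : (1 - z) ^ (1/2 - b) * (1 - z) ^ (b - 1) = (1 - z) ^ ((1:ℝ)/2 - 1) := by
    rw [← rpow_add hz1]; ring_nf
  rw [← hcancel, show (1:ℝ)/2 - b - 1 = -1/2 - b by ring]
  ring

lemma strictMonoOn_capEquationLHS (ha : 0 < a) (hb : 1/2 < b) :
    StrictMonoOn (capEquationLHS a b) (Ico 0 1) := by
  have hb0 : 0 < b := one_half_pos.trans hb
  refine strictMonoOn_of_deriv_pos (convex_Ico 0 1) (continuousOn_capEquationLHS ha hb0) ?_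
  intro z hz
  rw [interior_Ico] at hz
  have hz1 : 0 < 1 - z := sub_pos.2 hz.2
  rw [(hasDerivAt_capEquationLHS ha hb0 hz).deriv]
  have hB := incBeta_pos ha hb0 (Ioo_subset_Ioc_self hz)
  have hb' : 0 < b - 1/2 := sub_pos.2 hb
  positivity

lemma tendsto_capEquationLHS_nhdsLT_one (ha : 0 < a) (hb : 1/2 < b) :
    Tendsto (capEquationLHS a b) (𝓝[<] 1) atTop := by
  have hb0 : 0 < b := one_half_pos.trans hb
  have hsub : Tendsto (fun z : ℝ => 1 - z) (𝓝[<] 1) (𝓝[>] 0) := by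
    refine tendsto_nhdsWithin_of_tendsto_nhds_of_eventually_within _ ?_ ?_
    · exact ((continuous_const.sub continuous_id).tendsto' 1 0 (sub_self 1)).mono_left
        nhdsWithin_le_nhds
    · filter_upwards [self_mem_nhdsWithin] with z hz using sub_pos.2 (mem_Iio.1 hz)
  have hrpow := (tendsto_rpow_neg_nhdsGT_zero (sub_neg.2 hb)).comp hsub
  exact (hrpow.atTop_mul_pos (incBeta_pos ha hb0 ⟨zero_lt_one, le_rfl⟩)
    (tendsto_incBeta_nhdsLT_one ha hb0)).atTop_add
    (tendsto_incBeta_nhdsLT_one ha one_half_pos).neg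

lemma existsUnique_capEquationLHS_eq (ha : 0 < a) (hb : 1/2 < b) {C : ℝ} (hC : 0 < C) :
    ∃! z, z ∈ Ioo 0 1 ∧ capEquationLHS a b z = C := by
  obtain ⟨z, hz, hzC⟩ := exists_mem_Ioo_eq_of_tendsto_atTop zero_lt_one
    (continuousOn_capEquationLHS ha (one_half_pos.trans hb))
    (tendsto_capEquationLHS_nhdsLT_one ha hb) (by rwa [capEquationLHS_zero])
  refine ⟨z, ⟨hz, hzC⟩, fun y ⟨hy, hyC⟩ => ?_⟩
  exact (strictMonoOn_capEquationLHS ha hb).injOn (Ioo_subset_Ico_self hy)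
    (Ioo_subset_Ico_self hz) (hyC.trans hzC.symm)

end CapEquation

lemma Set.BijOn.existsUnique_mem_and {α β : Type*} {f : α → β} {s : Set α} {t : Set β}
    {P : β → Prop} (hf : BijOn f s t) (h : ∃! y, y ∈ t ∧ P y) : ∃! x, x ∈ s ∧ P (f x) := by
  obtain ⟨y, ⟨hy, hPy⟩, huniq⟩ := h
  obtain ⟨x, hx, rfl⟩ := hf.surjOn hy
  exact ⟨x, ⟨hx, hPy⟩, fun x' ⟨hx', hPx'⟩ => hf.injOn hx' hx (huniq _ ⟨hf.mapsTo hx', hPx'⟩)⟩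

lemma strictAntiOn_cos_half_sq : StrictAntiOn (fun α => cos (α / 2) ^ 2) (Icc 0 π) := by
  intro x hx y hy hxy
  have hcos : cos (y / 2) < cos (x / 2) :=
    strictAntiOn_cos ⟨by linarith [hx.1], by linarith [hx.2, pi_pos]⟩
      ⟨by linarith [hy.1], by linarith [hy.2, pi_pos]⟩ (by linarith)
  have hy0 : 0 ≤ cos (y / 2) :=
    cos_nonneg_of_mem_Icc ⟨by linarith [hy.1, pi_pos], by linarith [hy.2]⟩
  exact pow_lt_pow_left₀ hcos hy0 two_ne_zero

lemma bijOn_cos_half_sq : BijOn (fun α => cos (α / 2) ^ 2) (Ioo 0 π) (Ioo 0 1) := by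
  refine ⟨fun α hα => ⟨?_, ?_⟩, strictAntiOn_cos_half_sq.injOn.mono Ioo_subset_Icc_self,
    fun z hz => ⟨2 * arccos (√z), ⟨?_, ?_⟩, ?_⟩⟩
  · have := cos_pos_of_mem_Ioo (x := α / 2) ⟨by linarith [hα.1, pi_pos], by linarith [hα.2]⟩
    positivity
  · simpa using strictAntiOn_cos_half_sq ⟨le_rfl, pi_pos.le⟩ (Ioo_subset_Icc_self hα) hα.1
  · simpa using arccos_pos.2 ((sqrt_lt' one_pos).2 (by rw [one_pow]; exact hz.2))
  · linarith [arccos_lt_pi_div_two.2 (sqrt_pos.2 hz.1)]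
  · dsimp only
    rw [mul_div_cancel_left₀ _ two_ne_zero, cos_arccos (by linarith [sqrt_nonneg z])
      (sqrt_le_one.2 hz.2.le), sq_sqrt hz.1.le]

lemma sin_half_rpow_eq {α : ℝ} (hα : α ∈ Icc 0 π) (p : ℝ) :
    sin (α / 2) ^ p = (1 - cos (α / 2) ^ 2) ^ (p / 2) := by
  have hs : 0 ≤ sin (α / 2) :=
    sin_nonneg_of_nonneg_of_le_pi (by linarith [hα.1]) (by linarith [hα.2, pi_pos])
  rw [← sin_sq, ← rpow_two, ← rpow_mul hs]
  ring_nf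

/-- For an integer `d ≥ 3` and a real `q > 0`, there exists a unique `α ∈ (0, π)` with
`sin^{−(d−1)}(α/2) B(cos²(α/2); (d−2)/2, d/2) − B(cos²(α/2); (d−2)/2, 1/2)
  = √π Γ(d/2−1) / (q 2^{(d−2)/2} Γ((d−1)/2))`. -/
theorem support_angle_exists_unique (d : ℕ) (hd : 3 ≤ d) (q : ℝ) (hq : 0 < q) :
    ∃! α : ℝ, α ∈ Set.Ioo 0 π ∧
      Real.sin (α/2) ^ (-((d:ℝ) - 1)) * incBeta (Real.cos (α/2) ^ 2) (((d:ℝ) - 2)/2) ((d:ℝ)/2)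
          - incBeta (Real.cos (α/2) ^ 2) (((d:ℝ) - 2)/2) (1/2)
        = Real.sqrt π * Real.Gamma ((d:ℝ)/2 - 1)
            / (q * 2 ^ (((d:ℝ) - 2)/2) * Real.Gamma (((d:ℝ) - 1)/2)) := by
  have hd3 : (3:ℝ) ≤ d := by exact_mod_cast hd
  have hC : 0 < √π * Gamma ((d:ℝ)/2 - 1) / (q * 2 ^ (((d:ℝ) - 2)/2) * Gamma (((d:ℝ) - 1)/2)) := by
    have := Gamma_pos_of_pos (by linarith : 0 < (d:ℝ)/2 - 1)
    have := Gamma_pos_of_pos (by linarith : 0 < ((d:ℝ) - 1)/2)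
    positivity
  have hLHS : ∀ α ∈ Ioo 0 π,
      sin (α/2) ^ (-((d:ℝ) - 1)) * incBeta (cos (α/2) ^ 2) (((d:ℝ) - 2)/2) ((d:ℝ)/2)
        - incBeta (cos (α/2) ^ 2) (((d:ℝ) - 2)/2) (1/2)
        = capEquationLHS (((d:ℝ) - 2)/2) ((d:ℝ)/2) (cos (α/2) ^ 2) := fun α hα => by
    rw [capEquationLHS, sin_half_rpow_eq (Ioo_subset_Icc_self hα)]
    ring_nf
  refine (existsUnique_congr fun α => and_congr_right fun hα => by rw [hLHS α hα]).2 ?_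
  exact bijOn_cos_half_sq.existsUnique_mem_and
    (existsUnique_capEquationLHS_eq (by linarith) (by linarith) hC)
end
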